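/- arXiv:2205.07596 — 3 statements merged into one kernel-verified Lean document; each statement's English description precedes it below -/
import Mathlib

section
/- Let f : X → ℝ be measurable and bounded above, P a probability measure on a Polish space X. Then for any real τ, inf{ D(Q‖P) : Q(f) ≥ τ } = sup_{λ ≥ 0} λτ − log P(e^{λ f}), where Q(f) denotes ∫ f dQ and both infimum and supremum may be +∞. -/
open MeasureTheory ProbabilityTheory ENNReal

noncomputable section

open scoped Classical in
noncomputable def relEnt {X : Type*} [MeasurableSpace X] (Q P : Measure X) : ℝ≥0∞ :=
  if Q ≪ P ∧ Integrable (fun x => Real.log (Q.rnDeriv P x).toReal) Q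
  then ENNReal.ofReal (∫ x, Real.log (Q.rnDeriv P x).toReal ∂Q) else ⊤

open Real Filter

namespace IPD

variable {X : Type*} [MeasurableSpace X]

/-- pointwise bound for `|t| e^{l t}` -/
lemma key_bound {t M a b l : ℝ} (ht : t ≤ M) (ha : 0 < a) (hal : a ≤ l) (hlb : l ≤ b) :
    |t| * Real.exp (l * t) ≤ max (|M| * Real.exp (b * |M|)) a⁻¹ := by
  have hb : 0 < b := lt_of_lt_of_le ha (hal.trans hlb)
  rcases le_or_gt 0 t with h0 | h0
  · refine le_max_of_le_left ?_
    have h1 : |t| ≤ |M| := by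
      rw [abs_of_nonneg h0]; exact ht.trans (le_abs_self M)
    have h2 : Real.exp (l * t) ≤ Real.exp (b * |M|) := by
      apply Real.exp_le_exp.2
      have : l * t ≤ b * t := mul_le_mul_of_nonneg_right hlb h0
      refine this.trans (mul_le_mul_of_nonneg_left ?_ hb.le)
      exact ht.trans (le_abs_self M)
    exact mul_le_mul h1 h2 (Real.exp_pos _).le (abs_nonneg _)
  · refine le_max_of_le_right ?_
    have h1 : |t| * Real.exp (l * t) ≤ |t| * Real.exp (a * t) := by
      apply mul_le_mul_of_nonneg_left _ (abs_nonneg _)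
      apply Real.exp_le_exp.2
      nlinarith
    refine h1.trans ?_
    rw [abs_of_neg h0]
    set s := -t with hs
    have hs0 : 0 < s := by simp [hs]; linarith
    have h2 : a * t = -(a * s) := by simp [hs]
    have h3 : a * s ≤ Real.exp (a * s) := le_trans (by linarith) (Real.add_one_le_exp _)
    rw [h2, Real.exp_neg]
    rw [mul_comm, ← div_eq_inv_mul, div_le_iff₀ (Real.exp_pos _)]
    have h4 : s ≤ a⁻¹ * Real.exp (a * s) := by
      rw [← div_eq_inv_mul, le_div_iff₀ ha]
      calc s * a = a * s := mul_comm s a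
      _ ≤ Real.exp (a * s) := h3
    exact h4

/-- pointwise bound for `e^{l t}` -/
lemma key_bound' {t M b l : ℝ} (ht : t ≤ M) (h0 : 0 ≤ l) (hlb : l ≤ b) (hb : 0 ≤ b) :
    Real.exp (l * t) ≤ Real.exp (b * |M|) := by
  apply Real.exp_le_exp.2
  rcases le_or_gt 0 t with h | h
  · calc l * t ≤ b * t := mul_le_mul_of_nonneg_right hlb h
    _ ≤ b * |M| := mul_le_mul_of_nonneg_left (ht.trans (le_abs_self M)) hb
  · have : l * t ≤ 0 := mul_nonpos_of_nonneg_of_nonpos h0 h.le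
    exact this.trans (by positivity)


variable {P : Measure X} [IsProbabilityMeasure P] {f : X → ℝ} {M l : ℝ}

/-- partition function -/
def Z (P : Measure X) (f : X → ℝ) (l : ℝ) : ℝ := ∫ x, Real.exp (l * f x) ∂P

/-- log partition function -/
def Lam (P : Measure X) (f : X → ℝ) (l : ℝ) : ℝ := Real.log (Z P f l)

/-- tilted measure -/
def Q (P : Measure X) (f : X → ℝ) (l : ℝ) : Measure X := P.tilted (fun x => l * f x)

/-- mean of f under the tilted measure -/
def G (P : Measure X) (f : X → ℝ) (l : ℝ) : ℝ := ∫ x, f x ∂(Q P f l)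

lemma expInt (hf : Measurable f) (hM : ∀ x, f x ≤ M) {l : ℝ} (hl : 0 ≤ l) :
    Integrable (fun x => Real.exp (l * f x)) P := by
  refine (integrable_const (Real.exp (l * M))).mono'
    (measurable_exp.comp (hf.const_mul l)).aestronglyMeasurable (ae_of_all _ fun x => ?_)
  rw [Real.norm_eq_abs, abs_of_pos (Real.exp_pos _)]
  exact Real.exp_le_exp.2 (mul_le_mul_of_nonneg_left (hM x) hl)

lemma Z_pos (hf : Measurable f) (hM : ∀ x, f x ≤ M) {l : ℝ} (hl : 0 ≤ l) : 0 < Z P f l :=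
  integral_exp_pos (expInt hf hM hl)

lemma exp_Lam (hf : Measurable f) (hM : ∀ x, f x ≤ M) {l : ℝ} (hl : 0 ≤ l) :
    Real.exp (Lam P f l) = Z P f l := Real.exp_log (Z_pos hf hM hl)

lemma Z_zero : Z P f 0 = 1 := by simp [Z]

lemma Lam_zero : Lam P f 0 = 0 := by simp [Lam, Z_zero]

theorem Q_prob (hf : Measurable f) (hM : ∀ x, f x ≤ M) {l : ℝ} (hl : 0 ≤ l) :
    IsProbabilityMeasure (Q P f l) :=
  isProbabilityMeasure_tilted (expInt hf hM hl)

omit [IsProbabilityMeasure P] in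
lemma Q_ac : Q P f l ≪ P := tilted_absolutelyContinuous P _

lemma f_int_Q (hf : Measurable f) (hM : ∀ x, f x ≤ M) {l : ℝ} (hl : 0 < l) :
    Integrable f (Q P f l) := by
  rw [Q, Measure.tilted]
  rw [integrable_withDensity_iff]
  rotate_left
  · exact ((measurable_exp.comp (hf.const_mul l)).div_const _).ennreal_ofReal
  · exact ae_of_all _ fun x => ENNReal.ofReal_lt_top
  have hZ := Z_pos (P:=P) hf hM hl.le
  have hsimp : ∀ x : X, (ENNReal.ofReal (Real.exp (l * f x) / ∫ x, Real.exp (l * f x) ∂P)).toReal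
      = Real.exp (l * f x) / Z P f l := fun x => ENNReal.toReal_ofReal (by positivity)
  simp_rw [hsimp]
  refine (integrable_const (max (|M| * Real.exp ((l+1) * |M|)) l⁻¹ / Z P f l)).mono'
    ((hf.mul ((measurable_exp.comp (hf.const_mul l)).div_const _)).aestronglyMeasurable)
    (ae_of_all _ fun x => ?_)
  rw [Real.norm_eq_abs, mul_div_assoc', abs_div, abs_of_pos hZ, abs_mul,
    abs_of_pos (Real.exp_pos _)]
  have := key_bound (hM x) hl le_rfl (show l ≤ l + 1 by linarith)
  gcongr

lemma G_eq (hf : Measurable f) : G P f l = (∫ x, f x * Real.exp (l * f x) ∂P) / Z P f l := by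
  rw [G, Q, integral_tilted]
  simp_rw [smul_eq_mul, div_mul_eq_mul_div, mul_comm]
  rw [integral_div, Z]

lemma exp_int_Q (hf : Measurable f) (hM : ∀ x, f x ≤ M) {μ l : ℝ} (hμ : 0 < μ) (hl : 0 ≤ l) :
    Integrable (fun x => Real.exp ((l - μ) * f x)) (Q P f μ) := by
  have hZμ := Z_pos (P:=P) hf hM hμ.le
  rw [Q, Measure.tilted, integrable_withDensity_iff]
  rotate_left
  · exact ((measurable_exp.comp (hf.const_mul μ)).div_const _).ennreal_ofReal
  · exact ae_of_all _ fun x => ENNReal.ofReal_lt_top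
  have hsimp : ∀ x : X, Real.exp ((l - μ) * f x)
        * (ENNReal.ofReal (Real.exp (μ * f x) / ∫ x, Real.exp (μ * f x) ∂P)).toReal
      = Real.exp (l * f x) / Z P f μ := by
    intro x
    rw [ENNReal.toReal_ofReal (by positivity)]
    show Real.exp ((l - μ) * f x) * (Real.exp (μ * f x) / Z P f μ) = _
    rw [mul_div_assoc', ← Real.exp_add]
    ring_nf
  simp_rw [hsimp]
  exact (expInt hf hM hl).div_const _

lemma Z_ratio (hf : Measurable f) {μ l : ℝ} :
    ∫ x, Real.exp ((l - μ) * f x) ∂(Q P f μ) = Z P f l / Z P f μ := by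
  rw [Q, integral_exp_tilted]
  congr 1
  apply integral_congr_ae (ae_of_all _ fun x => ?_)
  simp only [Pi.add_apply]
  ring_nf

/-- tangent-line (Jensen) inequality for the log-partition function -/
lemma tangent (hf : Measurable f) (hM : ∀ x, f x ≤ M) {μ l : ℝ} (hμ : 0 < μ) (hl : 0 ≤ l) :
    Lam P f μ + (l - μ) * G P f μ ≤ Lam P f l := by
  have hZμ := Z_pos (P:=P) hf hM hμ.le
  have hZl := Z_pos (P:=P) hf hM hl
  have hprob : IsProbabilityMeasure (Q P f μ) := Q_prob hf hM hμ.le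
  set c := G P f μ with hc
  have hfint : Integrable f (Q P f μ) := f_int_Q hf hM hμ
  have hintl : Integrable (fun x => Real.exp ((l - μ) * f x)) (Q P f μ) := exp_int_Q hf hM hμ hl
  have pointwise : ∀ x, Real.exp ((l-μ)*c) + (Real.exp ((l-μ)*c) * (l-μ)) * (f x - c)
      ≤ Real.exp ((l - μ) * f x) := by
    intro x
    have h1 := Real.add_one_le_exp ((l-μ) * (f x - c))
    have h2 : Real.exp ((l-μ)*c) * ((l-μ) * (f x - c) + 1)
        ≤ Real.exp ((l-μ)*c) * Real.exp ((l-μ) * (f x - c)) :=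
      mul_le_mul_of_nonneg_left h1 (Real.exp_pos _).le
    rw [← Real.exp_add] at h2
    calc Real.exp ((l-μ)*c) + (Real.exp ((l-μ)*c) * (l-μ)) * (f x - c)
        = Real.exp ((l-μ)*c) * ((l-μ) * (f x - c) + 1) := by ring
      _ ≤ Real.exp ((l-μ)*c + (l-μ) * (f x - c)) := h2
      _ = Real.exp ((l - μ) * f x) := by ring_nf
  have hintL : Integrable (fun x => Real.exp ((l-μ)*c)
      + (Real.exp ((l-μ)*c) * (l-μ)) * (f x - c)) (Q P f μ) :=
    (integrable_const _).add ((hfint.sub (integrable_const c)).const_mul _)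
  have hmono := integral_mono hintL hintl pointwise
  rw [Z_ratio hf] at hmono
  have hLHS : ∫ x, (Real.exp ((l-μ)*c) + (Real.exp ((l-μ)*c) * (l-μ)) * (f x - c)) ∂(Q P f μ)
      = Real.exp ((l-μ)*c) := by
    have e1 : ∫ x, (Real.exp ((l-μ)*c) + (Real.exp ((l-μ)*c) * (l-μ)) * (f x - c)) ∂(Q P f μ)
        = (∫ _x, Real.exp ((l-μ)*c) ∂(Q P f μ))
          + ∫ x, (Real.exp ((l-μ)*c) * (l-μ)) * (f x - c) ∂(Q P f μ) :=
      integral_add (integrable_const _) ((hfint.sub (integrable_const c)).const_mul _)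
    have e2 : ∫ x, (Real.exp ((l-μ)*c) * (l-μ)) * (f x - c) ∂(Q P f μ)
        = (Real.exp ((l-μ)*c) * (l-μ)) * ∫ x, (f x - c) ∂(Q P f μ) := integral_const_mul _ _
    have e3 : ∫ x, (f x - c) ∂(Q P f μ) = (∫ x, f x ∂(Q P f μ)) - ∫ _x, c ∂(Q P f μ) :=
      integral_sub hfint (integrable_const c)
    have hINT : ∫ x, f x ∂(Q P f μ) = c := rfl
    rw [e1, e2, e3, hINT, integral_const, integral_const, probReal_univ]
    simp
  rw [hLHS] at hmono
  have hlog : (l-μ)*c ≤ Real.log (Z P f l / Z P f μ) := by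
    calc (l-μ)*c = Real.log (Real.exp ((l-μ)*c)) := (Real.log_exp _).symm
    _ ≤ Real.log (Z P f l / Z P f μ) := Real.log_le_log (Real.exp_pos _) hmono
  rw [Real.log_div hZl.ne' hZμ.ne'] at hlog
  show Lam P f μ + (l - μ) * c ≤ Lam P f l
  rw [Lam, Lam] at *
  linarith

lemma G_mono (hf : Measurable f) (hM : ∀ x, f x ≤ M) {μ l : ℝ} (hμ : 0 < μ) (hμl : μ ≤ l) :
    G P f μ ≤ G P f l := by
  rcases eq_or_lt_of_le hμl with h | h
  · rw [h]
  · have hl : 0 < l := hμ.trans h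
    have h1 := tangent (P:=P) hf hM hμ hl.le
    have h2 := tangent (P:=P) hf hM hl hμ.le
    nlinarith

lemma cont_N (hf : Measurable f) (hM : ∀ x, f x ≤ M) {μ₀ : ℝ} (hμ₀ : 0 < μ₀) :
    ContinuousAt (fun l => ∫ x, f x * Real.exp (l * f x) ∂P) μ₀ := by
  apply continuousAt_of_dominated (bound := fun _ => max (|M| * Real.exp ((μ₀+1) * |M|)) (μ₀/2)⁻¹)
  · exact Filter.Eventually.of_forall fun l =>
      (hf.mul (measurable_exp.comp (hf.const_mul l))).aestronglyMeasurable
  · have hev : Set.Ioo (μ₀/2) (μ₀+1) ∈ nhds μ₀ := Ioo_mem_nhds (by linarith) (by linarith)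
    filter_upwards [hev] with l hl
    apply ae_of_all _ fun x => ?_
    rw [Real.norm_eq_abs, abs_mul, Real.abs_exp]
    exact key_bound (hM x) (half_pos hμ₀) hl.1.le hl.2.le
  · exact integrable_const _
  · exact ae_of_all _ fun x =>
      (continuous_const.mul (Real.continuous_exp.comp (continuous_id.mul continuous_const))).continuousAt

lemma cont_Z (hf : Measurable f) (hM : ∀ x, f x ≤ M) {μ₀ : ℝ} (hμ₀ : 0 < μ₀) :
    ContinuousAt (Z P f) μ₀ := by
  apply continuousAt_of_dominated (bound := fun _ => Real.exp ((μ₀+1) * |M|))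
  · exact Filter.Eventually.of_forall fun l =>
      (measurable_exp.comp (hf.const_mul l)).aestronglyMeasurable
  · have hev : Set.Ioo (μ₀/2) (μ₀+1) ∈ nhds μ₀ := Ioo_mem_nhds (by linarith) (by linarith)
    filter_upwards [hev] with l hl
    apply ae_of_all _ fun x => ?_
    rw [Real.norm_eq_abs, Real.abs_exp]
    exact key_bound' (hM x) (le_of_lt (lt_of_lt_of_le (half_pos hμ₀) hl.1.le)) hl.2.le (by linarith)
  · exact integrable_const _
  · exact ae_of_all _ fun x =>
      (Real.continuous_exp.comp (continuous_id.mul continuous_const)).continuousAt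

lemma cont_G (hf : Measurable f) (hM : ∀ x, f x ≤ M) {μ₀ : ℝ} (hμ₀ : 0 < μ₀) :
    ContinuousAt (G P f) μ₀ := by
  have hGeq : G P f = fun l => (∫ x, f x * Real.exp (l * f x) ∂P) / Z P f l :=
    funext fun l => G_eq hf
  rw [hGeq]
  exact (cont_N hf hM hμ₀).div (cont_Z hf hM hμ₀) (Z_pos hf hM hμ₀.le).ne'

lemma tendsto_Z_zero (hf : Measurable f) (hM : ∀ x, f x ≤ M) :
    Tendsto (Z P f) (nhdsWithin 0 (Set.Ioi 0)) (nhds 1) := by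
  have h1 : Tendsto (fun l => ∫ x, Real.exp (l * f x) ∂P) (nhdsWithin 0 (Set.Ioi 0))
      (nhds (∫ _x, (1:ℝ) ∂P)) := by
    apply tendsto_integral_filter_of_dominated_convergence (bound := fun _ => Real.exp (1 * |M|))
    · exact Filter.Eventually.of_forall fun l =>
        (measurable_exp.comp (hf.const_mul l)).aestronglyMeasurable
    · have hev : Set.Ioo (0:ℝ) 1 ∈ nhdsWithin 0 (Set.Ioi 0) :=
        Ioo_mem_nhdsGT_of_mem ⟨le_refl 0, zero_lt_one⟩
      filter_upwards [hev] with l hl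
      apply ae_of_all _ fun x => ?_
      rw [Real.norm_eq_abs, Real.abs_exp]
      exact key_bound' (hM x) hl.1.le hl.2.le zero_le_one
    · exact integrable_const _
    · apply ae_of_all _ fun x => ?_
      have hc : Continuous fun l : ℝ => Real.exp (l * f x) :=
        Real.continuous_exp.comp (continuous_id.mul continuous_const)
      have := hc.tendsto (0:ℝ)
      simp only [zero_mul, Real.exp_zero] at this
      exact this.mono_left nhdsWithin_le_nhds
  have h2 : (∫ _x, (1:ℝ) ∂P) = 1 := by simp
  rw [h2] at h1
  exact h1

lemma tendsto_Lam_zero (hf : Measurable f) (hM : ∀ x, f x ≤ M) :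
    Tendsto (Lam P f) (nhdsWithin 0 (Set.Ioi 0)) (nhds 0) := by
  have := (Real.continuousAt_log one_ne_zero).tendsto.comp (tendsto_Z_zero (P:=P) hf hM)
  rw [Real.log_one] at this
  exact this

lemma relEnt_Q (hf : Measurable f) (hM : ∀ x, f x ≤ M) {l : ℝ} (hl : 0 < l) :
    relEnt (Q P f l) P = ENNReal.ofReal (l * G P f l - Lam P f l) := by
  have hexp := expInt (P:=P) hf hM hl.le
  have hfQ : Integrable f (Q P f l) := f_int_Q hf hM hl
  have hprob : IsProbabilityMeasure (Q P f l) := Q_prob hf hM hl.le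
  have hlog : (fun x => Real.log (((Q P f l).rnDeriv P) x).toReal)
      =ᵐ[P] fun x => l * f x - Lam P f l := by
    have := log_rnDeriv_tilted_left_self (μ:=P) (f := fun x => l * f x) hexp
    exact this
  have hlogQ : (fun x => Real.log (((Q P f l).rnDeriv P) x).toReal)
      =ᵐ[Q P f l] fun x => l * f x - Lam P f l := hlog.filter_mono (Q_ac (P:=P)).ae_le
  have hint : Integrable (fun x => Real.log (((Q P f l).rnDeriv P) x).toReal) (Q P f l) :=
    ((hfQ.const_mul l).sub (integrable_const _)).congr hlogQ.symm
  rw [relEnt, if_pos ⟨Q_ac, hint⟩, integral_congr_ae hlogQ]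
  have e1 : ∫ x, (l * f x - Lam P f l) ∂(Q P f l)
      = (∫ x, l * f x ∂(Q P f l)) - ∫ _x, Lam P f l ∂(Q P f l) :=
    integral_sub (hfQ.const_mul l) (integrable_const _)
  have e2 : ∫ x, l * f x ∂(Q P f l) = l * ∫ x, f x ∂(Q P f l) := integral_const_mul _ _
  rw [e1, e2, integral_const, probReal_univ]
  simp [G]

/-- weak duality (Donsker–Varadhan inequality) -/
lemma weak_duality (hf : Measurable f) (hM : ∀ x, f x ≤ M) {τ l : ℝ} (hl : 0 ≤ l)
    (Qm : Measure X) (hQ : IsProbabilityMeasure Qm) (hfQ : Integrable f Qm)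
    (hτ : τ ≤ ∫ x, f x ∂Qm) :
    ((l * τ - Lam P f l : ℝ) : EReal) ≤ ((relEnt Qm P : ℝ≥0∞) : EReal) := by
  rw [relEnt]
  split_ifs with h
  swap
  · simp
  obtain ⟨hQP, hint⟩ := h
  set ρ := Qm.rnDeriv P with hρ
  -- main claim
  have key : l * (∫ x, f x ∂Qm) - Lam P f l ≤ ∫ x, Real.log (ρ x).toReal ∂Qm := by
    set u : X → ℝ := fun x => Real.log ((ρ x).toReal) - (l * f x - Lam P f l) with hu
    have hu_int : Integrable u Qm := hint.sub ((hfQ.const_mul l).sub (integrable_const _))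
    have hone : Integrable (fun x => 1 - u x) Qm := (integrable_const 1).sub hu_int
    have hQa : ∀ᵐ x ∂Qm, 0 < ρ x := Measure.rnDeriv_pos hQP
    have hQb : ∀ᵐ x ∂Qm, ρ x < ⊤ := hQP.ae_le (Measure.rnDeriv_lt_top Qm P)
    -- pointwise bound
    have hptw : ∀ᵐ x ∂Qm, 1 - u x ≤ Real.exp (l * f x - Lam P f l) / (ρ x).toReal := by
      filter_upwards [hQa, hQb] with x h0 h1
      have htR : 0 < (ρ x).toReal := ENNReal.toReal_pos h0.ne' h1.ne
      have hpos : 0 < Real.exp (l * f x - Lam P f l) / (ρ x).toReal := by positivity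
      have hle := Real.log_le_sub_one_of_pos hpos
      rw [Real.log_div (Real.exp_pos _).ne' htR.ne', Real.log_exp] at hle
      simp only [hu]
      linarith
    have hGpos : ∀ᵐ x ∂Qm, 0 ≤ Real.exp (l * f x - Lam P f l) / (ρ x).toReal :=
      ae_of_all _ fun x => by positivity
    -- integral of max(1-u,0)
    have hpp : Integrable (fun x => max (1 - u x) 0) Qm := hone.pos_part
    have step0 : ∫ x, (1 - u x) ∂Qm ≤ ∫ x, max (1 - u x) 0 ∂Qm :=
      integral_mono hone hpp fun x => le_max_left _ _
    have step1 : ENNReal.ofReal (∫ x, max (1 - u x) 0 ∂Qm)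
        = ∫⁻ x, ENNReal.ofReal (max (1 - u x) 0) ∂Qm :=
      ofReal_integral_eq_lintegral_ofReal hpp (ae_of_all _ fun x => le_max_right _ _)
    have step2 : ∫⁻ x, ENNReal.ofReal (max (1 - u x) 0) ∂Qm
        ≤ ∫⁻ x, ENNReal.ofReal (Real.exp (l * f x - Lam P f l) / (ρ x).toReal) ∂Qm := by
      apply lintegral_mono_ae
      filter_upwards [hptw, hGpos] with x h1 h2
      exact ENNReal.ofReal_le_ofReal (max_le h1 h2)
    have hmeasG : Measurable fun x => ENNReal.ofReal (Real.exp (l * f x - Lam P f l) / (ρ x).toReal) :=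
      ((measurable_exp.comp ((hf.const_mul l).sub_const _)).div
        (Qm.measurable_rnDeriv P).ennreal_toReal).ennreal_ofReal
    have step3 : ∫⁻ x, ENNReal.ofReal (Real.exp (l * f x - Lam P f l) / (ρ x).toReal) ∂Qm
        ≤ ∫⁻ x, ENNReal.ofReal (Real.exp (l * f x - Lam P f l)) ∂P := by
      conv_lhs => rw [← Measure.withDensity_rnDeriv_eq Qm P hQP]
      rw [lintegral_withDensity_eq_lintegral_mul P (Qm.measurable_rnDeriv P) hmeasG]
      apply lintegral_mono_ae
      filter_upwards [Measure.rnDeriv_lt_top Qm P] with x hx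
      simp only [Pi.mul_apply]
      rcases eq_or_ne (ρ x) 0 with h0 | h0
      · rw [← hρ] at *
        rw [h0, zero_mul]
        exact zero_le
      · have htR : 0 < (ρ x).toReal := ENNReal.toReal_pos h0 hx.ne
        rw [← hρ]
        calc ρ x * ENNReal.ofReal (Real.exp (l * f x - Lam P f l) / (ρ x).toReal)
            = ENNReal.ofReal ((ρ x).toReal) * ENNReal.ofReal (Real.exp (l * f x - Lam P f l) / (ρ x).toReal) := by
              rw [ENNReal.ofReal_toReal hx.ne]
          _ = ENNReal.ofReal ((ρ x).toReal * (Real.exp (l * f x - Lam P f l) / (ρ x).toReal)) := by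
              rw [ENNReal.ofReal_mul htR.le]
          _ = ENNReal.ofReal (Real.exp (l * f x - Lam P f l)) := by
              rw [mul_div_cancel₀ _ htR.ne']
          _ ≤ ENNReal.ofReal (Real.exp (l * f x - Lam P f l)) := le_rfl
    have hintP : Integrable (fun x => Real.exp (l * f x - Lam P f l)) P := by
      have : (fun x => Real.exp (l * f x - Lam P f l))
          = fun x => Real.exp (l * f x) * Real.exp (-(Lam P f l)) := by
        funext x; rw [← Real.exp_add]; ring_nf
      rw [this]
      exact (expInt hf hM hl).mul_const _
    have step4 : ∫⁻ x, ENNReal.ofReal (Real.exp (l * f x - Lam P f l)) ∂P = 1 := by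
      rw [← ofReal_integral_eq_lintegral_ofReal hintP (ae_of_all _ fun x => (Real.exp_pos _).le)]
      have : ∫ x, Real.exp (l * f x - Lam P f l) ∂P = 1 := by
        have e : (fun x => Real.exp (l * f x - Lam P f l))
            = fun x => Real.exp (l * f x) * Real.exp (-(Lam P f l)) := by
          funext x; rw [← Real.exp_add]; ring_nf
        rw [e, integral_mul_const]
        rw [show (∫ x, Real.exp (l * f x) ∂P) = Z P f l from rfl,
          Real.exp_neg, exp_Lam hf hM hl]
        exact mul_inv_cancel₀ (Z_pos hf hM hl).ne'
      rw [this, ENNReal.ofReal_one]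
    -- conclude ∫ (1 - u) ≤ 1
    have hle1 : ∫ x, (1 - u x) ∂Qm ≤ 1 := by
      rcases le_or_gt (∫ x, (1 - u x) ∂Qm) 0 with h | h
      · linarith
      have h2 : ENNReal.ofReal (∫ x, max (1 - u x) 0 ∂Qm) ≤ 1 := by
        rw [step1]
        exact (step2.trans step3).trans_eq step4
      have h3 : ∫ x, max (1 - u x) 0 ∂Qm ≤ 1 := by
        rw [← ENNReal.ofReal_one, ENNReal.ofReal_le_ofReal_iff zero_le_one] at h2
        exact h2
      linarith
    have hsub : ∫ x, (1 - u x) ∂Qm = 1 - ∫ x, u x ∂Qm := by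
      rw [integral_sub (integrable_const 1) hu_int, integral_const, probReal_univ]
      simp
    have huge : 0 ≤ ∫ x, u x ∂Qm := by rw [hsub] at hle1; linarith
    have hsplit : ∫ x, Real.log ((ρ x).toReal) ∂Qm
        = (∫ x, u x ∂Qm) + ((l * ∫ x, f x ∂Qm) - Lam P f l) := by
      have e1 : ∫ x, u x ∂Qm = (∫ x, Real.log ((ρ x).toReal) ∂Qm)
          - ∫ x, (l * f x - Lam P f l) ∂Qm := integral_sub hint ((hfQ.const_mul l).sub (integrable_const _))
      have e2 : ∫ x, (l * f x - Lam P f l) ∂Qm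
          = (∫ x, l * f x ∂Qm) - ∫ _x, Lam P f l ∂Qm :=
        integral_sub (hfQ.const_mul l) (integrable_const _)
      have e3 : ∫ x, l * f x ∂Qm = l * ∫ x, f x ∂Qm := integral_const_mul _ _
      rw [e2, e3, integral_const, probReal_univ] at e1
      simp only [ENNReal.toReal_one, one_smul, smul_eq_mul] at e1
      linarith
    rw [hsplit]
    linarith
  -- pass to EReal
  have hτ2 : l * τ - Lam P f l ≤ ∫ x, Real.log ((ρ x).toReal) ∂Qm := by
    have : l * τ ≤ l * ∫ x, f x ∂Qm := mul_le_mul_of_nonneg_left hτ hl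
    linarith
  rw [EReal.coe_ennreal_ofReal]
  exact_mod_cast hτ2.trans (le_max_left _ _)
end IPD

set_option maxHeartbeats 1000000 in
/-- Duality for the I-projection: for `f` measurable and bounded above,
`inf { D(Q‖P) : Q(f) ≥ τ } = sup_{λ ≥ 0} λτ − log P(e^{λ f})`. -/
theorem iProjection_duality {X : Type*} [MeasurableSpace X] [TopologicalSpace X]
    [PolishSpace X] [BorelSpace X]
    (P : Measure X) [IsProbabilityMeasure P]
    (f : X → ℝ) (hf : Measurable f) (hbd : BddAbove (Set.range f)) (τ : ℝ) :
    (⨅ (Q : Measure X) (_ : IsProbabilityMeasure Q) (_ : Integrable f Q)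
        (_ : τ ≤ ∫ x, f x ∂Q), (relEnt Q P : EReal)) =
      ⨆ (l : ℝ) (_ : 0 ≤ l),
        ((l * τ - Real.log (∫ x, Real.exp (l * f x) ∂P) : ℝ) : EReal) := by
  classical
  obtain ⟨M, hMub⟩ := hbd
  have hM : ∀ x, f x ≤ M := fun x => hMub ⟨x, rfl⟩
  set S : EReal := ⨆ (l : ℝ) (_ : 0 ≤ l),
      ((l * τ - Real.log (∫ x, Real.exp (l * f x) ∂P) : ℝ) : EReal) with hS
  set I : EReal := ⨅ (Q : Measure X) (_ : IsProbabilityMeasure Q) (_ : Integrable f Q)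
      (_ : τ ≤ ∫ x, f x ∂Q), (relEnt Q P : EReal) with hI
  have hLam : ∀ l : ℝ, Real.log (∫ x, Real.exp (l * f x) ∂P) = IPD.Lam P f l := fun l => rfl
  have hmemS : ∀ l : ℝ, 0 ≤ l → ((l * τ - IPD.Lam P f l : ℝ) : EReal) ≤ S := by
    intro l hl
    rw [hS]
    exact le_iSup₂_of_le l hl (by rw [hLam])
  have hS0 : (0 : EReal) ≤ S := by
    have h1 := hmemS 0 le_rfl
    rw [IPD.Lam_zero] at h1
    simpa using h1
  have hmax : ∀ a : ℝ, ((a : EReal) ≤ S) → (((max a 0 : ℝ)) : EReal) ≤ S := by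
    intro a ha
    rcases le_total a 0 with h | h
    · rw [max_eq_right h]; simpa using hS0
    · rw [max_eq_left h]; exact ha
  have hInfLe : ∀ (Qm : Measure X), IsProbabilityMeasure Qm → Integrable f Qm →
      τ ≤ (∫ x, f x ∂Qm) → I ≤ ((relEnt Qm P : ℝ≥0∞) : EReal) := by
    intro Qm h1 h2 h3
    rw [hI]
    exact iInf_le_of_le Qm (iInf_le_of_le h1 (iInf_le_of_le h2 (iInf_le_of_le h3 le_rfl)))
  refine le_antisymm ?hle ?hge
  case hge =>
    refine le_iInf fun Qm => le_iInf fun h1 => le_iInf fun h2 => le_iInf fun h3 => ?_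
    refine iSup_le fun l => iSup_le fun hl => ?_
    rw [hLam l]
    exact IPD.weak_duality hf hM hl Qm h1 h2 h3
  -- now the hard direction : I ≤ S
  by_cases hStop : S = ⊤
  · rw [hStop]; exact le_top
  have hSne : S ≠ ⊥ := by
    intro h
    rw [h] at hS0
    simp at hS0
  have hSreal : ∀ l : ℝ, 0 ≤ l → l * τ - IPD.Lam P f l ≤ S.toReal := by
    intro l hl
    have h1 := hmemS l hl
    rw [← EReal.coe_toReal hStop hSne] at h1
    exact_mod_cast h1
  by_cases hcase : ∃ μ : ℝ, 0 < μ ∧ τ ≤ IPD.G P f μ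
  · -- Case 1
    obtain ⟨μ₁, hμ₁, hτμ₁⟩ := hcase
    set s : Set ℝ := {μ | 0 < μ ∧ τ ≤ IPD.G P f μ} with hsdef
    have hsne : s.Nonempty := ⟨μ₁, hμ₁, hτμ₁⟩
    have hbdd : BddBelow s := ⟨0, fun μ hμ => hμ.1.le⟩
    set μ₀ := sInf s with hμ₀def
    have hμ₀0 : 0 ≤ μ₀ := le_csInf hsne fun μ hμ => hμ.1.le
    have hge2 : ∀ ν, μ₀ < ν → τ ≤ IPD.G P f ν := by
      intro ν hν
      obtain ⟨m, hm, hmν⟩ := exists_lt_of_csInf_lt hsne hν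
      exact hm.2.trans (IPD.G_mono hf hM hm.1 hmν.le)
    rcases eq_or_lt_of_le hμ₀0 with h0 | h0
    · -- μ₀ = 0
      have hgall : ∀ ν : ℝ, 0 < ν → τ ≤ IPD.G P f ν := by
        intro ν hν
        exact hge2 ν (by rw [← h0]; exact hν)
      have hIeps : ∀ ε : ℝ, 0 < ε → I ≤ (ε : EReal) := by
        intro ε hε
        have h2 := IPD.tendsto_Lam_zero (P := P) hf hM
        have h1 : Filter.Tendsto (fun ν : ℝ => IPD.Lam P f (2*ν))
            (nhdsWithin 0 (Set.Ioi 0)) (nhds 0) := by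
          apply h2.comp
          have hc : Filter.Tendsto (fun ν : ℝ => 2*ν) (nhds (0:ℝ)) (nhds 0) := by
            have := (continuous_const.mul continuous_id :
              Continuous fun ν : ℝ => 2*ν).tendsto (0:ℝ)
            simpa using (continuous_mul_left (2:ℝ)).tendsto 0
          apply tendsto_nhdsWithin_of_tendsto_nhds_of_eventually_within _
            (hc.mono_left nhdsWithin_le_nhds)
          filter_upwards [self_mem_nhdsWithin] with ν hν
          have : (0:ℝ) < ν := hν
          exact Set.mem_Ioi.2 (by linarith)
        have h3 : Filter.Tendsto (fun ν : ℝ => IPD.Lam P f (2*ν) - 2 * IPD.Lam P f ν)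
            (nhdsWithin 0 (Set.Ioi 0)) (nhds 0) := by
          have := h1.sub ((h2.const_mul 2))
          simpa using this
        have h4 : ∀ᶠ ν in nhdsWithin (0:ℝ) (Set.Ioi 0),
            IPD.Lam P f (2*ν) - 2 * IPD.Lam P f ν < ε := h3.eventually_lt_const hε
        obtain ⟨ν, hνε, hν0⟩ := (h4.and self_mem_nhdsWithin).exists
        have hν0' : (0:ℝ) < ν := hν0
        have hprob : IsProbabilityMeasure (IPD.Q P f ν) := IPD.Q_prob hf hM hν0'.le
        have hrel := IPD.relEnt_Q (P := P) hf hM hν0'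
        have htan := IPD.tangent (P := P) hf hM hν0' (show (0:ℝ) ≤ 2*ν by linarith)
        have hstep : I ≤ ((relEnt (IPD.Q P f ν) P : ℝ≥0∞) : EReal) := by
          apply hInfLe _ hprob (IPD.f_int_Q hf hM hν0')
          rw [show (∫ x, f x ∂(IPD.Q P f ν)) = IPD.G P f ν from rfl]
          exact hgall ν hν0'
        refine hstep.trans ?_
        rw [hrel, EReal.coe_ennreal_ofReal]
        have hle : ν * IPD.G P f ν - IPD.Lam P f ν ≤ ε := by nlinarith
        have : max (ν * IPD.G P f ν - IPD.Lam P f ν) 0 ≤ ε := max_le hle hε.le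
        exact_mod_cast this
      have hI0 : I ≤ 0 := by
        by_contra hc
        push_neg at hc
        rcases exists_between hc with ⟨c, hc0, hcI⟩
        induction c using EReal.rec with
        | bot => exact absurd hc0 (by simp)
        | coe r =>
          have hr : (0:ℝ) < r := by exact_mod_cast hc0
          exact absurd (hIeps r hr) hcI.not_ge
        | top => exact absurd le_top hcI.not_ge
      exact hI0.trans hS0
    · -- μ₀ > 0
      have hcont := IPD.cont_G (P := P) hf hM h0
      have hGle : IPD.G P f μ₀ ≤ τ := by
        have hlt : ∀ μ, 0 < μ → μ < μ₀ → IPD.G P f μ < τ := by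
          intro μ hμpos hμlt
          by_contra h
          push_neg at h
          exact absurd (csInf_le hbdd ⟨hμpos, h⟩) hμlt.not_ge
        have T : Filter.Tendsto (IPD.G P f) (nhdsWithin μ₀ (Set.Iio μ₀))
            (nhds (IPD.G P f μ₀)) := hcont.tendsto.mono_left nhdsWithin_le_nhds
        apply le_of_tendsto T
        have hIoo : Set.Ioo 0 μ₀ ∈ nhdsWithin μ₀ (Set.Iio μ₀) :=
          Ioo_mem_nhdsLT_of_mem ⟨h0, le_rfl⟩
        filter_upwards [hIoo] with μ hμ
        exact (hlt μ hμ.1 hμ.2).le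
      have hGge : τ ≤ IPD.G P f μ₀ := by
        have T : Filter.Tendsto (IPD.G P f) (nhdsWithin μ₀ (Set.Ioi μ₀))
            (nhds (IPD.G P f μ₀)) := hcont.tendsto.mono_left nhdsWithin_le_nhds
        apply ge_of_tendsto T
        filter_upwards [self_mem_nhdsWithin] with ν hν
        exact hge2 ν hν
      have hGeq : IPD.G P f μ₀ = τ := le_antisymm hGle hGge
      have hprob : IsProbabilityMeasure (IPD.Q P f μ₀) := IPD.Q_prob hf hM h0.le
      have hstep : I ≤ ((relEnt (IPD.Q P f μ₀) P : ℝ≥0∞) : EReal) := by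
        apply hInfLe _ hprob (IPD.f_int_Q hf hM h0)
        rw [show (∫ x, f x ∂(IPD.Q P f μ₀)) = IPD.G P f μ₀ from rfl, hGeq]
      refine hstep.trans ?_
      rw [IPD.relEnt_Q (P := P) hf hM h0, hGeq, EReal.coe_ennreal_ofReal]
      exact hmax _ (hmemS μ₀ h0.le)
  · -- Case 2 : G < τ everywhere
    push_neg at hcase
    set φ : ℝ → ℝ := fun l => l * τ - IPD.Lam P f l with hφ
    have hφmono : ∀ μ l : ℝ, 0 < μ → μ ≤ l → φ μ ≤ φ l := by
      intro μ l hμ hμl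
      have hl : 0 < l := lt_of_lt_of_le hμ hμl
      have htan := IPD.tangent (P := P) hf hM hl hμ.le
      have hG := hcase l hl
      have h2 : (l - μ) * IPD.G P f l ≤ (l - μ) * τ :=
        mul_le_mul_of_nonneg_left hG.le (by linarith)
      simp only [hφ]
      nlinarith
    set φn : ℕ → ℝ := fun n => φ ((n:ℝ) + 1) with hφn
    have hφn_mono : Monotone φn := by
      intro n m hnm
      apply hφmono _ _ (by positivity)
      have : (n:ℝ) ≤ m := by exact_mod_cast hnm
      linarith
    have hφn_bdd : BddAbove (Set.range φn) := by
      refine ⟨S.toReal, ?_⟩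
      rintro _ ⟨n, rfl⟩
      exact hSreal _ (by positivity)
    set s' : ℝ := ⨆ n, φn n with hs'
    have htend : Filter.Tendsto φn Filter.atTop (nhds s') :=
      tendsto_atTop_ciSup hφn_mono hφn_bdd
    have hs'S : ((s' : ℝ) : EReal) ≤ S := by
      have hT : Filter.Tendsto (fun n => ((φn n : ℝ) : EReal)) Filter.atTop (nhds ((s' : ℝ) : EReal)) :=
        EReal.tendsto_coe.2 htend
      apply le_of_tendsto hT
      filter_upwards with n
      exact hmemS _ (by positivity)
    have hEeq : ∀ n : ℕ, (∫ x, Real.exp (((n:ℝ)+1) * f x) * Real.exp (-(((n:ℝ)+1) * τ)) ∂P)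
        = Real.exp (-(φ ((n:ℝ)+1))) := by
      intro n
      rw [integral_mul_const,
        show (∫ x, Real.exp (((n:ℝ)+1) * f x) ∂P) = IPD.Z P f ((n:ℝ)+1) from rfl,
        ← IPD.exp_Lam hf hM (show (0:ℝ) ≤ (n:ℝ)+1 by positivity), ← Real.exp_add]
      congr 1
      simp only [hφ]
      ring
    -- Claim A : P (f ≥ τ + δ) = 0
    have hA : ∀ δ : ℝ, 0 < δ → P {x | τ + δ ≤ f x} = 0 := by
      intro δ hδ
      set A := {x | τ + δ ≤ f x} with hAdef
      have hAmeas : MeasurableSet A := measurableSet_le measurable_const hf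
      have key : ∀ n : ℕ, (P A).toReal ≤ Real.exp (-(φ 1)) * Real.exp (-(((n:ℝ)+1) * δ)) := by
        intro n
        have hn0 : (0:ℝ) ≤ (n:ℝ)+1 := by positivity
        have hIntF : Integrable
            (fun x => Real.exp (((n:ℝ)+1) * f x) * Real.exp (-(((n:ℝ)+1) * τ))) P :=
          (IPD.expInt hf hM hn0).mul_const _
        have h1 : Real.exp (((n:ℝ)+1) * δ) * (P A).toReal
            ≤ ∫ x in A, Real.exp (((n:ℝ)+1) * f x) * Real.exp (-(((n:ℝ)+1) * τ)) ∂P := by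
          apply setIntegral_ge_of_const_le_real hAmeas (measure_ne_top P A)
          · intro x hx
            rw [← Real.exp_add]
            apply Real.exp_le_exp.2
            have hx' : τ + δ ≤ f x := hx
            nlinarith [Nat.cast_nonneg (α := ℝ) n]
          · exact hIntF.integrableOn
        have h2 : ∫ x in A, Real.exp (((n:ℝ)+1) * f x) * Real.exp (-(((n:ℝ)+1) * τ)) ∂P
            ≤ ∫ x, Real.exp (((n:ℝ)+1) * f x) * Real.exp (-(((n:ℝ)+1) * τ)) ∂P :=
          setIntegral_le_integral hIntF (ae_of_all _ fun x => by positivity)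
        have h3 : φ 1 ≤ φ ((n:ℝ)+1) := hφmono 1 _ one_pos (by linarith [Nat.cast_nonneg (α := ℝ) n])
        have h4 : Real.exp (((n:ℝ)+1) * δ) * (P A).toReal ≤ Real.exp (-(φ 1)) := by
          have h5 : Real.exp (-(φ ((n:ℝ)+1))) ≤ Real.exp (-(φ 1)) :=
            Real.exp_le_exp.2 (by linarith)
          calc Real.exp (((n:ℝ)+1) * δ) * (P A).toReal
              ≤ ∫ x, Real.exp (((n:ℝ)+1) * f x) * Real.exp (-(((n:ℝ)+1) * τ)) ∂P := h1.trans h2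
            _ = Real.exp (-(φ ((n:ℝ)+1))) := hEeq n
            _ ≤ Real.exp (-(φ 1)) := h5
        rw [mul_comm, ← le_div_iff₀ (Real.exp_pos _)] at h4
        rwa [Real.exp_neg (((n:ℝ)+1) * δ), ← div_eq_mul_inv]
      have hlim : Filter.Tendsto (fun n : ℕ => Real.exp (-(φ 1)) * Real.exp (-(((n:ℝ)+1) * δ)))
          Filter.atTop (nhds 0) := by
        rw [show (0:ℝ) = Real.exp (-(φ 1)) * 0 by ring]
        apply Filter.Tendsto.const_mul
        apply Real.tendsto_exp_atBot.comp
        apply Filter.tendsto_neg_atTop_atBot.comp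
        exact (Filter.tendsto_atTop_add_const_right Filter.atTop 1
          tendsto_natCast_atTop_atTop).atTop_mul_const hδ
      have h6 : (P A).toReal ≤ 0 := ge_of_tendsto' hlim key
      have h7 : (P A).toReal = 0 := le_antisymm h6 ENNReal.toReal_nonneg
      rcases (ENNReal.toReal_eq_zero_iff _).1 h7 with h | h
      · exact h
      · exact absurd h (measure_ne_top P A)
    have hae : ∀ᵐ x ∂P, f x ≤ τ := by
      rw [ae_iff]
      have hsub : {x | ¬ f x ≤ τ} ⊆ ⋃ n : ℕ, {x | τ + 1/((n:ℝ)+1) ≤ f x} := by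
        intro x hx
        simp only [Set.mem_setOf_eq, not_le] at hx
        obtain ⟨n, hn⟩ := exists_nat_one_div_lt (sub_pos.2 hx)
        exact Set.mem_iUnion.2 ⟨n, by simp only [Set.mem_setOf_eq]; linarith⟩
      exact measure_mono_null hsub (measure_iUnion_null fun n => hA _ (by positivity))
    set A₀ := {x | f x = τ} with hA₀
    have hA₀meas : MeasurableSet A₀ := hf (measurableSet_singleton τ)
    have hlimB : Filter.Tendsto
        (fun n : ℕ => ∫ x, Real.exp (((n:ℝ)+1) * f x) * Real.exp (-(((n:ℝ)+1) * τ)) ∂P)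
        Filter.atTop (nhds ((P A₀).toReal)) := by
      have hlim1 : Filter.Tendsto
          (fun n : ℕ => ∫ x, Real.exp (((n:ℝ)+1) * f x) * Real.exp (-(((n:ℝ)+1) * τ)) ∂P)
          Filter.atTop (nhds (∫ x, A₀.indicator (fun _ => (1:ℝ)) x ∂P)) := by
        apply tendsto_integral_filter_of_dominated_convergence (bound := fun _ => (1:ℝ))
        · exact Filter.Eventually.of_forall fun n =>
            ((measurable_exp.comp (hf.const_mul _)).mul_const _).aestronglyMeasurable
        · apply Filter.Eventually.of_forall fun n => ?_
          filter_upwards [hae] with x hx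
          rw [Real.norm_eq_abs, abs_of_pos (by positivity), ← Real.exp_add,
            Real.exp_le_one_iff]
          nlinarith [Nat.cast_nonneg (α := ℝ) n]
        · exact integrable_const _
        · filter_upwards [hae] with x hx
          have hrw : ∀ n : ℕ, Real.exp (((n:ℝ)+1) * f x) * Real.exp (-(((n:ℝ)+1) * τ))
              = Real.exp (((n:ℝ)+1) * (f x - τ)) := by
            intro n
            rw [← Real.exp_add]
            congr 1
            ring
          rcases eq_or_lt_of_le hx with heq | hlt
          · have : ∀ n : ℕ, Real.exp (((n:ℝ)+1) * f x) * Real.exp (-(((n:ℝ)+1) * τ)) = 1 := by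
              intro n
              rw [hrw n, heq]
              simp
            rw [Set.indicator_of_mem (by exact heq : x ∈ A₀)]
            simp_rw [this]
            exact tendsto_const_nhds
          · have hx0 : x ∉ A₀ := by
              simp only [hA₀, Set.mem_setOf_eq]
              exact hlt.ne
            rw [Set.indicator_of_notMem hx0]
            have hT : Filter.Tendsto (fun n : ℕ => Real.exp (((n:ℝ)+1) * (f x - τ)))
                Filter.atTop (nhds 0) := by
              apply Real.tendsto_exp_atBot.comp
              exact (Filter.tendsto_atTop_add_const_right Filter.atTop 1
                tendsto_natCast_atTop_atTop).atTop_mul_const_of_neg (by linarith)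
            exact hT.congr fun n => (hrw n).symm
      have heq2 : ∫ x, A₀.indicator (fun _ => (1:ℝ)) x ∂P = (P A₀).toReal := by
        rw [integral_indicator_const 1 hA₀meas]
        simp [Measure.real]
      rwa [heq2] at hlim1
    have hlimB2 : Filter.Tendsto
        (fun n : ℕ => ∫ x, Real.exp (((n:ℝ)+1) * f x) * Real.exp (-(((n:ℝ)+1) * τ)) ∂P)
        Filter.atTop (nhds (Real.exp (-s'))) := by
      have he : (fun n : ℕ => ∫ x, Real.exp (((n:ℝ)+1) * f x) * Real.exp (-(((n:ℝ)+1) * τ)) ∂P)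
          = fun n : ℕ => Real.exp (-(φn n)) := by
        funext n
        rw [hEeq n]
      rw [he]
      exact (Real.continuous_exp.tendsto _).comp htend.neg
    have hPA₀ : (P A₀).toReal = Real.exp (-s') := tendsto_nhds_unique hlimB hlimB2
    set d : X → ℝ≥0∞ := A₀.indicator (fun _ => (P A₀)⁻¹) with hd
    have hdmeas : Measurable d := measurable_const.indicator hA₀meas
    set Qs := P.withDensity d with hQs
    have hPA₀0 : P A₀ ≠ 0 := by
      intro h
      rw [h] at hPA₀
      simp only [ENNReal.toReal_zero] at hPA₀
      exact absurd hPA₀.symm (Real.exp_pos (-s')).ne'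
    have hPA₀top : P A₀ ≠ ⊤ := measure_ne_top P A₀
    have hQsprob : IsProbabilityMeasure Qs := by
      constructor
      rw [hQs, withDensity_apply _ MeasurableSet.univ, Measure.restrict_univ, hd,
        lintegral_indicator hA₀meas, setLIntegral_const]
      exact ENNReal.inv_mul_cancel hPA₀0 hPA₀top
    have hQsAc : Qs ≪ P := withDensity_absolutelyContinuous _ _
    have hQsA₀ : Qs A₀ᶜ = 0 := by
      rw [hQs, withDensity_apply _ hA₀meas.compl]
      have : ∀ᵐ x ∂(P.restrict A₀ᶜ), d x = 0 := by
        rw [ae_restrict_iff' hA₀meas.compl]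
        apply ae_of_all _ fun x hx => ?_
        exact Set.indicator_of_notMem hx _
      rw [lintegral_congr_ae this]
      simp
    have hQae : ∀ᵐ x ∂Qs, x ∈ A₀ := by
      rw [ae_iff]
      exact hQsA₀
    have hfae : f =ᵐ[Qs] fun _ => τ := by
      filter_upwards [hQae] with x hx
      exact hx
    have hfQs : Integrable f Qs := (integrable_const τ).congr hfae.symm
    have hintf : ∫ x, f x ∂Qs = τ := by
      rw [integral_congr_ae hfae, integral_const, probReal_univ]
      simp
    have hrn : Qs.rnDeriv P =ᵐ[P] d := Measure.rnDeriv_withDensity P hdmeas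
    have hlogQs : (fun x => Real.log ((Qs.rnDeriv P x)).toReal) =ᵐ[Qs] fun _ => s' := by
      filter_upwards [hQae, hQsAc.ae_le hrn] with x hx hrnx
      rw [hrnx, hd, Set.indicator_of_mem hx, ENNReal.toReal_inv, hPA₀, ← Real.exp_neg,
        neg_neg, Real.log_exp]
    have hintlog : Integrable (fun x => Real.log ((Qs.rnDeriv P x)).toReal) Qs :=
      (integrable_const s').congr hlogQs.symm
    have hrelQs : relEnt Qs P = ENNReal.ofReal s' := by
      rw [relEnt, if_pos ⟨hQsAc, hintlog⟩, integral_congr_ae hlogQs, integral_const,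
        probReal_univ]
      simp
    have hstep := hInfLe Qs hQsprob hfQs (le_of_eq hintf.symm)
    refine hstep.trans ?_
    rw [hrelQs, EReal.coe_ennreal_ofReal]
    exact hmax _ hs'S


end
end

section
/- Let f : X → ℝ be measurable and bounded above, P a probability measure on a Polish space X. Then for any α ≥ 0, sup{ Q(f) : D(Q‖P) ≤ α } = inf_{η > 0} ηα + η log P(e^{(1/η) f}). -/
open MeasureTheory ProbabilityTheory ENNReal

noncomputable section

section helpers
variable {X : Type*} [MeasurableSpace X]

lemma pw_exp_le {η t M : ℝ} (hη : 0 < η) (ht : t ≤ M) :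
    Real.exp (t / η) ≤ 1 + Real.exp (|M| / η) := by
  rcases le_or_gt t 0 with h | h
  · have : Real.exp (t / η) ≤ 1 :=
      Real.exp_le_one_iff.mpr (div_nonpos_of_nonpos_of_nonneg h hη.le)
    nlinarith [Real.exp_pos (|M| / η)]
  · have h1 : t / η ≤ |M| / η := by gcongr; exact ht.trans (le_abs_self M)
    have := Real.exp_le_exp.mpr h1
    linarith

lemma pw_abs_mul_exp_le {η t M : ℝ} (hη : 0 < η) (ht : t ≤ M) :
    |t| * Real.exp (t / η) ≤ η + |M| * Real.exp (|M| / η) := by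
  rcases le_or_gt t 0 with h | h
  · have h1 : |t| * Real.exp (t / η) ≤ η := by
      rw [abs_of_nonpos h]
      have h2 : -t / η ≤ Real.exp (-t / η) := by
        have := Real.add_one_le_exp (-t / η); linarith
      have h3 : Real.exp (t/η) = (Real.exp (-t/η))⁻¹ := by
        rw [← Real.exp_neg, neg_div, neg_neg]
      rw [h3, mul_inv_le_iff₀ (Real.exp_pos _)]
      calc -t = η * (-t / η) := by field_simp
      _ ≤ η * Real.exp (-t/η) := mul_le_mul_of_nonneg_left h2 hη.le
    nlinarith [Real.exp_pos (|M|/η), abs_nonneg M]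
  · have hM : 0 < M := h.trans_le ht
    have h1 : |t| * Real.exp (t/η) ≤ |M| * Real.exp (|M| / η) := by
      have ha : |t| ≤ |M| := by rw [abs_of_pos h, abs_of_pos hM]; exact ht
      have hb : Real.exp (t/η) ≤ Real.exp (|M|/η) := by
        apply Real.exp_le_exp.mpr; gcongr; exact ht.trans (le_abs_self M)
      exact mul_le_mul ha hb (Real.exp_pos _).le (abs_nonneg M)
    linarith

/-- `exp s - 1 ≤ s * exp s` for `s`. -/
lemma exp_sub_one_le_mul (s : ℝ) : Real.exp s - 1 ≤ s * Real.exp s := by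
  have h : (1 - s) * Real.exp s ≤ 1 := by
    have h1 : 1 - s ≤ Real.exp (-s) := by have := Real.add_one_le_exp (-s); linarith
    calc (1 - s) * Real.exp s ≤ Real.exp (-s) * Real.exp s :=
          mul_le_mul_of_nonneg_right h1 (Real.exp_pos s).le
    _ = 1 := by rw [← Real.exp_add]; simp
  nlinarith [Real.exp_pos s]

/-- Core Gibbs-type inequality. -/
lemma gibbs_core (Q P : Measure X) [IsProbabilityMeasure Q] [IsProbabilityMeasure P]
    (hQP : Q ≪ P) (g : X → ℝ) (hg : Measurable g) (hgpos : ∀ x, 0 < g x)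
    (hg1 : ∫⁻ x, ENNReal.ofReal (g x) ∂P ≤ 1)
    (hint1 : Integrable (fun x => Real.log (g x)) Q)
    (hint2 : Integrable (fun x => Real.log ((Q.rnDeriv P x).toReal)) Q) :
    ∫ x, Real.log (g x) ∂Q ≤ ∫ x, Real.log ((Q.rnDeriv P x).toReal) ∂Q := by
  set ρ : X → ℝ := fun x => ((Q.rnDeriv P x).toReal) with hρdef
  have hρmeas : Measurable ρ := (Measure.measurable_rnDeriv Q P).ennreal_toReal
  have hρposQ : ∀ᵐ x ∂Q, 0 < Q.rnDeriv P x := Measure.rnDeriv_pos hQP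
  have hρltQ : ∀ᵐ x ∂Q, Q.rnDeriv P x < ⊤ := hQP.ae_le (Measure.rnDeriv_lt_top Q P)
  have hρpos : ∀ᵐ x ∂Q, 0 < ρ x := by
    filter_upwards [hρposQ, hρltQ] with x h1 h2
    exact ENNReal.toReal_pos h1.ne' h2.ne
  set T : X → ℝ := fun x => g x / ρ x with hTdef
  have hTmeas : Measurable T := hg.div hρmeas
  have hTnonneg : ∀ x, 0 ≤ T x := fun x => div_nonneg (hgpos x).le ENNReal.toReal_nonneg
  have hTlint : ∫⁻ x, ENNReal.ofReal (T x) ∂Q ≤ 1 := by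
    conv_lhs => rw [← Measure.withDensity_rnDeriv_eq Q P hQP]
    rw [lintegral_withDensity_eq_lintegral_mul P (Measure.measurable_rnDeriv Q P)
      (hTmeas.ennreal_ofReal)]
    refine le_trans (lintegral_mono_ae ?_) hg1
    filter_upwards [Measure.rnDeriv_lt_top Q P] with x hlt
    simp only [Pi.mul_apply]
    rcases eq_or_ne (Q.rnDeriv P x) 0 with h0 | h0
    · simp [h0]
    · have hρx : 0 < ρ x := ENNReal.toReal_pos h0 hlt.ne
      have : Q.rnDeriv P x = ENNReal.ofReal (ρ x) := by
        rw [hρdef, ENNReal.ofReal_toReal hlt.ne]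
      rw [this, ← ENNReal.ofReal_mul ENNReal.toReal_nonneg]
      rw [hTdef]
      simp only []
      rw [mul_div_cancel₀ _ hρx.ne']
  have hTint : Integrable T Q := by
    refine ⟨hTmeas.aestronglyMeasurable, ?_⟩
    rw [hasFiniteIntegral_iff_ofReal (Filter.Eventually.of_forall hTnonneg)]
    exact hTlint.trans_lt ENNReal.one_lt_top
  have hTval : ∫ x, T x ∂Q ≤ 1 := by
    have h := ofReal_integral_eq_lintegral_ofReal hTint (Filter.Eventually.of_forall hTnonneg)
    have h2 : ENNReal.ofReal (∫ x, T x ∂Q) ≤ ENNReal.ofReal 1 := by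
      rw [h, ENNReal.ofReal_one]; exact hTlint
    exact (ENNReal.ofReal_le_ofReal_iff zero_le_one).mp h2
  have hmono : ∫ x, (Real.log (g x) - Real.log (ρ x)) ∂Q ≤ ∫ x, (T x - 1) ∂Q := by
    refine integral_mono_ae (hint1.sub hint2) (hTint.sub (integrable_const 1)) ?_
    filter_upwards [hρpos] with x hx
    have hgx := hgpos x
    have hTx : 0 < T x := div_pos hgx hx
    calc Real.log (g x) - Real.log (ρ x) = Real.log (T x) := (Real.log_div hgx.ne' hx.ne').symm
    _ ≤ T x - 1 := Real.log_le_sub_one_of_pos hTx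
  rw [integral_sub hint1 hint2, integral_sub hTint (integrable_const 1)] at hmono
  simp only [integral_const, measure_univ, ENNReal.toReal_one, probReal_univ, smul_eq_mul, one_mul] at hmono
  linarith

/-- KL divergence is nonnegative. -/
lemma kl_nonneg (Q P : Measure X) [IsProbabilityMeasure Q] [IsProbabilityMeasure P]
    (hQP : Q ≪ P)
    (hint2 : Integrable (fun x => Real.log ((Q.rnDeriv P x).toReal)) Q) :
    0 ≤ ∫ x, Real.log ((Q.rnDeriv P x).toReal) ∂Q := by
  have h := gibbs_core Q P hQP (fun _ => 1) measurable_const (fun _ => one_pos)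
    (by simp) (by simp) hint2
  simpa using h

variable {P : Measure X} [IsProbabilityMeasure P] {f : X → ℝ} {M : ℝ}

lemma int_exp (hf : Measurable f) (hM : ∀ x, f x ≤ M) {η : ℝ} (hη : 0 < η) :
    Integrable (fun x => Real.exp (f x / η)) P := by
  refine (integrable_const (1 + Real.exp (|M| / η))).mono'
    ((hf.div_const η).exp).aestronglyMeasurable ?_
  refine Filter.Eventually.of_forall fun x => ?_
  rw [Real.norm_eq_abs, abs_of_pos (Real.exp_pos _)]
  exact pw_exp_le hη (hM x)

lemma Z_pos (hf : Measurable f) (hM : ∀ x, f x ≤ M) {η : ℝ} (hη : 0 < η) :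
    0 < ∫ x, Real.exp (f x / η) ∂P :=
  integral_exp_pos (int_exp hf hM hη)

/-- Gibbs' inequality. -/
lemma gibbs_ineq (hf : Measurable f) (hM : ∀ x, f x ≤ M)
    (Q : Measure X) [IsProbabilityMeasure Q] (hQP : Q ≪ P) (hfQ : Integrable f Q)
    (hint2 : Integrable (fun x => Real.log ((Q.rnDeriv P x).toReal)) Q)
    {η : ℝ} (hη : 0 < η) :
    ∫ x, f x ∂Q ≤ η * (∫ x, Real.log ((Q.rnDeriv P x).toReal) ∂Q)
      + η * Real.log (∫ x, Real.exp (f x / η) ∂P) := by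
  set Z : ℝ := ∫ x, Real.exp (f x / η) ∂P with hZdef
  have hZpos : 0 < Z := Z_pos hf hM hη
  set g : X → ℝ := fun x => Real.exp (f x / η) / Z with hgdef
  have hgpos : ∀ x, 0 < g x := fun x => div_pos (Real.exp_pos _) hZpos
  have hgZ : ∫ x, g x ∂P = 1 := by
    rw [hgdef, integral_div, hZdef, div_self hZpos.ne']
  have hg1 : ∫⁻ x, ENNReal.ofReal (g x) ∂P ≤ 1 := by
    rw [← ofReal_integral_eq_lintegral_ofReal ((int_exp hf hM hη).div_const Z)
      (Filter.Eventually.of_forall fun x => (hgpos x).le), hgZ, ENNReal.ofReal_one]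
  have hlogg : ∀ x, Real.log (g x) = f x / η - Real.log Z := fun x => by
    rw [hgdef]
    simp only []
    rw [Real.log_div (Real.exp_pos _).ne' hZpos.ne', Real.log_exp]
  have hint1 : Integrable (fun x => Real.log (g x)) Q := by
    refine (Integrable.sub (hfQ.div_const η) (integrable_const (Real.log Z))).congr ?_
    exact Filter.Eventually.of_forall fun x => (hlogg x).symm
  have h := gibbs_core Q P hQP g ((hf.div_const η).exp.div_const Z) hgpos hg1 hint1 hint2
  have hval : ∫ x, Real.log (g x) ∂Q = (∫ x, f x ∂Q) / η - Real.log Z := by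
    rw [integral_congr_ae (Filter.Eventually.of_forall hlogg),
      integral_sub (hfQ.div_const η) (integrable_const _), integral_div, integral_const]
    simp [measure_univ]
  rw [hval] at h
  have := (div_le_iff₀ hη).mp (by linarith : (∫ x, f x ∂Q) / η ≤
    (∫ x, Real.log ((Q.rnDeriv P x).toReal) ∂Q) + Real.log Z)
  linarith [this]

lemma int_f_tilted (hf : Measurable f) (hM : ∀ x, f x ≤ M) {η : ℝ} (hη : 0 < η) :
    Integrable f (P.tilted (fun x => f x / η)) := by
  set Z : ℝ := ∫ x, Real.exp (f x / η) ∂P with hZdef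
  have hZpos : 0 < Z := Z_pos hf hM hη
  rw [Measure.tilted]
  rw [integrable_withDensity_iff (((hf.div_const η).exp.div_const Z).ennreal_ofReal)
    (Filter.Eventually.of_forall fun x => ENNReal.ofReal_lt_top)]
  refine (integrable_const ((η + |M| * Real.exp (|M| / η)) / Z)).mono'
    (hf.mul (((hf.div_const η).exp.div_const Z).ennreal_ofReal.ennreal_toReal)).aestronglyMeasurable
    (Filter.Eventually.of_forall fun x => ?_)
  rw [Real.norm_eq_abs, ENNReal.toReal_ofReal (by positivity), abs_mul,
    abs_of_nonneg (by positivity : (0:ℝ) ≤ Real.exp (f x / η) / Z)]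
  rw [div_eq_mul_inv (Real.exp (f x / η)) Z, ← mul_assoc, div_eq_mul_inv]
  refine mul_le_mul_of_nonneg_right ?_ (by positivity)
  exact pw_abs_mul_exp_le hη (hM x)

lemma integral_f_tilted (hf : Measurable f) (hM : ∀ x, f x ≤ M) {η : ℝ} (hη : 0 < η) :
    ∫ x, f x ∂(P.tilted (fun x => f x / η))
      = (∫ x, f x * Real.exp (f x / η) ∂P) / (∫ x, Real.exp (f x / η) ∂P) := by
  rw [integral_tilted, ← integral_div]
  congr 1 with x
  simp only [smul_eq_mul]
  ring

lemma int_mul_exp (hf : Measurable f) (hM : ∀ x, f x ≤ M) {η : ℝ} (hη : 0 < η) :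
    Integrable (fun x => f x * Real.exp (f x / η)) P := by
  refine (integrable_const (η + |M| * Real.exp (|M| / η))).mono'
    (hf.mul (hf.div_const η).exp).aestronglyMeasurable
    (Filter.Eventually.of_forall fun x => ?_)
  rw [Real.norm_eq_abs, abs_mul, abs_of_pos (Real.exp_pos _)]
  exact pw_abs_mul_exp_le hη (hM x)

end helpers

section helpers2
variable {X : Type*} [MeasurableSpace X] {P : Measure X} [IsProbabilityMeasure P]
  {f : X → ℝ} {M : ℝ}

lemma relEnt_self (P : Measure X) [IsProbabilityMeasure P] : relEnt P P = 0 := by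
  have h1 : (fun x => Real.log ((P.rnDeriv P x).toReal)) =ᵐ[P] (fun _ => 0) := by
    filter_upwards [Measure.rnDeriv_self P] with x hx
    rw [hx]; simp
  have hint : Integrable (fun x => Real.log ((P.rnDeriv P x).toReal)) P :=
    (integrable_const 0).congr h1.symm
  simp only [relEnt]
  rw [if_pos ⟨Measure.AbsolutelyContinuous.rfl, hint⟩, integral_congr_ae h1]

  simp

lemma log_rnDeriv_tilted_ae (hf : Measurable f) (hM : ∀ x, f x ≤ M) {η : ℝ} (hη : 0 < η) :
    (fun x => Real.log (((P.tilted (fun x => f x / η)).rnDeriv P x).toReal))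
      =ᵐ[(P.tilted (fun x => f x / η))]
      (fun x => f x / η - Real.log (∫ x, Real.exp (f x / η) ∂P)) :=
  (tilted_absolutelyContinuous P (fun x => f x / η)).ae_le
    (log_rnDeriv_tilted_left_self (int_exp hf hM hη))

lemma int_log_rnDeriv_tilted (hf : Measurable f) (hM : ∀ x, f x ≤ M) {η : ℝ} (hη : 0 < η) :
    Integrable (fun x => Real.log (((P.tilted (fun x => f x / η)).rnDeriv P x).toReal))
      (P.tilted (fun x => f x / η)) := by
  refine (Integrable.sub ((int_f_tilted hf hM hη).div_const η)
    (integrable_const (Real.log (∫ x, Real.exp (f x / η) ∂P)))).congr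
    (log_rnDeriv_tilted_ae hf hM hη).symm

lemma integral_log_rnDeriv_tilted (hf : Measurable f) (hM : ∀ x, f x ≤ M) {η : ℝ} (hη : 0 < η) :
    ∫ x, Real.log (((P.tilted (fun x => f x / η)).rnDeriv P x).toReal)
        ∂(P.tilted (fun x => f x / η))
      = (∫ x, f x ∂(P.tilted (fun x => f x / η))) / η
        - Real.log (∫ x, Real.exp (f x / η) ∂P) := by
  rw [integral_congr_ae (log_rnDeriv_tilted_ae hf hM hη),
    integral_sub ((int_f_tilted hf hM hη).div_const η) (integrable_const _),
    integral_div, integral_const]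
  haveI : IsProbabilityMeasure (P.tilted (fun x => f x / η)) :=
    isProbabilityMeasure_tilted (int_exp hf hM hη)
  simp [measure_univ]

lemma relEnt_tilted (hf : Measurable f) (hM : ∀ x, f x ≤ M) {η : ℝ} (hη : 0 < η) :
    relEnt (P.tilted (fun x => f x / η)) P
      = ENNReal.ofReal ((∫ x, f x ∂(P.tilted (fun x => f x / η))) / η
        - Real.log (∫ x, Real.exp (f x / η) ∂P)) := by
  simp only [relEnt]
  rw [if_pos ⟨tilted_absolutelyContinuous P _, int_log_rnDeriv_tilted hf hM hη⟩,
    integral_log_rnDeriv_tilted hf hM hη]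

lemma kl_tilted_nonneg (hf : Measurable f) (hM : ∀ x, f x ≤ M) {η : ℝ} (hη : 0 < η) :
    0 ≤ (∫ x, f x ∂(P.tilted (fun x => f x / η))) / η
        - Real.log (∫ x, Real.exp (f x / η) ∂P) := by
  haveI : IsProbabilityMeasure (P.tilted (fun x => f x / η)) :=
    isProbabilityMeasure_tilted (int_exp hf hM hη)
  have := kl_nonneg (P.tilted (fun x => f x / η)) P (tilted_absolutelyContinuous P _)
    (int_log_rnDeriv_tilted hf hM hη)
  rwa [integral_log_rnDeriv_tilted hf hM hη] at this

/-- Continuity of the partition function in the temperature. -/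
lemma contAt_Z (hf : Measurable f) (hM : ∀ x, f x ≤ M) {η₀ : ℝ} (hη₀ : 0 < η₀) :
    ContinuousAt (fun η => ∫ x, Real.exp (f x / η) ∂P) η₀ := by
  have hmem : Set.Ioi (η₀ / 2) ∈ nhds η₀ := Ioi_mem_nhds (by linarith)
  refine continuousAt_of_dominated (bound := fun _ => 1 + Real.exp (|M| / (η₀/2)))
    ?_ ?_ (integrable_const _) ?_
  · exact Filter.Eventually.of_forall fun η => ((hf.div_const η).exp).aestronglyMeasurable
  · filter_upwards [hmem] with η hη
    refine Filter.Eventually.of_forall fun x => ?_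
    have hη2 : (0:ℝ) < η₀ / 2 := by linarith
    have hηpos : 0 < η := lt_trans hη2 hη
    rw [Real.norm_eq_abs, abs_of_pos (Real.exp_pos _)]
    refine (pw_exp_le hηpos (hM x)).trans ?_
    have : Real.exp (|M| / η) ≤ Real.exp (|M| / (η₀/2)) := by
      apply Real.exp_le_exp.mpr; gcongr; exacts [hη.le]
    linarith
  · refine Filter.Eventually.of_forall fun x => ?_
    exact Real.continuous_exp.continuousAt.comp ((continuousAt_const.div continuousAt_id hη₀.ne'))

lemma contAt_N (hf : Measurable f) (hM : ∀ x, f x ≤ M) {η₀ : ℝ} (hη₀ : 0 < η₀) :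
    ContinuousAt (fun η => ∫ x, f x * Real.exp (f x / η) ∂P) η₀ := by
  have hmem : Set.Ioo (η₀ / 2) (2 * η₀) ∈ nhds η₀ :=
    Ioo_mem_nhds (by linarith) (by linarith)
  refine continuousAt_of_dominated
    (bound := fun _ => 2 * η₀ + |M| * Real.exp (|M| / (η₀/2))) ?_ ?_ (integrable_const _) ?_
  · exact Filter.Eventually.of_forall fun η => (hf.mul (hf.div_const η).exp).aestronglyMeasurable
  · filter_upwards [hmem] with η hη
    refine Filter.Eventually.of_forall fun x => ?_
    have hη2 : (0:ℝ) < η₀ / 2 := by linarith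
    have hηpos : 0 < η := lt_trans hη2 hη.1
    rw [Real.norm_eq_abs, abs_mul, abs_of_pos (Real.exp_pos _)]
    refine (pw_abs_mul_exp_le hηpos (hM x)).trans ?_
    have h1 : Real.exp (|M| / η) ≤ Real.exp (|M| / (η₀/2)) := by
      apply Real.exp_le_exp.mpr; gcongr; exacts [hη.1.le]
    have h2 : |M| * Real.exp (|M| / η) ≤ |M| * Real.exp (|M| / (η₀/2)) :=
      mul_le_mul_of_nonneg_left h1 (abs_nonneg M)
    have := hη.2
    linarith
  · refine Filter.Eventually.of_forall fun x => ?_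
    exact continuousAt_const.mul
      (Real.continuous_exp.continuousAt.comp ((continuousAt_const.div continuousAt_id hη₀.ne')))

/-- `Z η → 1` as `η → ∞`. -/
lemma tendsto_Z_one (hf : Measurable f) (hM : ∀ x, f x ≤ M) :
    Filter.Tendsto (fun η : ℝ => ∫ x, Real.exp (f x / η) ∂P) Filter.atTop (nhds 1) := by
  have h1 : (1:ℝ) = ∫ _x, (1:ℝ) ∂P := by simp
  rw [h1]
  refine tendsto_integral_filter_of_dominated_convergence (fun _ => 1 + Real.exp |M|)
    ?_ ?_ (integrable_const _) ?_
  · exact Filter.Eventually.of_forall fun η => ((hf.div_const η).exp).aestronglyMeasurable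
  · filter_upwards [Filter.eventually_ge_atTop (1:ℝ)] with η hη
    refine Filter.Eventually.of_forall fun x => ?_
    have hηpos : (0:ℝ) < η := lt_of_lt_of_le one_pos hη
    rw [Real.norm_eq_abs, abs_of_pos (Real.exp_pos _)]
    refine (pw_exp_le hηpos (hM x)).trans ?_
    have : Real.exp (|M| / η) ≤ Real.exp |M| := by
      apply Real.exp_le_exp.mpr
      rw [div_le_iff₀ hηpos]
      nlinarith [abs_nonneg M]
    linarith
  · refine Filter.Eventually.of_forall fun x => ?_
    have h2 : Filter.Tendsto (fun η : ℝ => f x / η) Filter.atTop (nhds 0) :=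
      tendsto_const_nhds.div_atTop Filter.tendsto_id
    have := (Real.continuous_exp.continuousAt (x := (0:ℝ))).tendsto.comp h2
    simpa [Function.comp_def] using this

/-- pointwise limit `η (exp (t/η) - 1) → t`. -/
lemma tendsto_eta_exp (t : ℝ) :
    Filter.Tendsto (fun η : ℝ => η * (Real.exp (t / η) - 1)) Filter.atTop (nhds t) := by
  rcases eq_or_ne t 0 with rfl | ht
  · simpa using tendsto_const_nhds (x := (0:ℝ)) (f := Filter.atTop)
  · have hslope : Filter.Tendsto (fun h : ℝ => (Real.exp h - 1) / h)
        (nhdsWithin 0 {0}ᶜ) (nhds 1) := by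
      have := hasDerivAt_iff_tendsto_slope.mp (Real.hasDerivAt_exp 0)
      rw [Real.exp_zero] at this
      refine this.congr fun h => ?_
      rw [slope_def_field]
      simp [Real.exp_zero]
    have hto0 : Filter.Tendsto (fun η : ℝ => t / η) Filter.atTop (nhdsWithin 0 {0}ᶜ) := by
      refine tendsto_nhdsWithin_of_tendsto_nhds_of_eventually_within _
        (tendsto_const_nhds.div_atTop Filter.tendsto_id) ?_
      filter_upwards [Filter.eventually_gt_atTop (0:ℝ)] with η hη
      exact div_ne_zero ht hη.ne'
    have hcomp : Filter.Tendsto (fun η : ℝ => (Real.exp (t / η) - 1) / (t / η))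
        Filter.atTop (nhds 1) := hslope.comp hto0
    have := hcomp.const_mul t
    rw [mul_one] at this
    refine this.congr' ?_
    filter_upwards [Filter.eventually_gt_atTop (0:ℝ)] with η hη
    field_simp

lemma pw_eta_exp_bound {η t M : ℝ} (hη : 1 ≤ η) (ht : t ≤ M) (hM0 : 0 ≤ M) :
    |η * (Real.exp (t / η) - 1)| ≤ |t| + M * Real.exp M := by
  have hηpos : (0:ℝ) < η := lt_of_lt_of_le one_pos hη
  rcases le_or_gt t 0 with h | h
  · have hlow : t ≤ η * (Real.exp (t / η) - 1) := by
      have := Real.add_one_le_exp (t / η)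
      have h2 : t / η ≤ Real.exp (t / η) - 1 := by linarith
      calc t = η * (t / η) := by field_simp
      _ ≤ η * (Real.exp (t / η) - 1) := mul_le_mul_of_nonneg_left h2 hηpos.le
    have hup : η * (Real.exp (t / η) - 1) ≤ 0 := by
      have : Real.exp (t / η) ≤ 1 :=
        Real.exp_le_one_iff.mpr (div_nonpos_of_nonpos_of_nonneg h hηpos.le)
      nlinarith
    rw [abs_of_nonpos hup]
    have : 0 ≤ M * Real.exp M := by positivity
    rw [abs_of_nonpos h]
    linarith
  · have h0 : 0 ≤ η * (Real.exp (t / η) - 1) := by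
      have : (1:ℝ) ≤ Real.exp (t / η) :=
        Real.one_le_exp (div_nonneg h.le hηpos.le)
      nlinarith
    rw [abs_of_nonneg h0]
    have h1 : η * (Real.exp (t / η) - 1) ≤ t * Real.exp (t / η) := by
      have := exp_sub_one_le_mul (t / η)
      calc η * (Real.exp (t / η) - 1) ≤ η * (t / η * Real.exp (t / η)) :=
            mul_le_mul_of_nonneg_left this hηpos.le
      _ = t * Real.exp (t / η) := by field_simp
  
    have h2 : t * Real.exp (t / η) ≤ M * Real.exp M := by
      have ha : t / η ≤ t := by
        rw [div_le_iff₀ hηpos]; nlinarith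
      have hb : Real.exp (t / η) ≤ Real.exp M := Real.exp_le_exp.mpr (ha.trans ht)
      exact mul_le_mul ht hb (Real.exp_pos _).le hM0
    have : 0 ≤ |t| := abs_nonneg t
    linarith

/-- if `f` is `P`-integrable, `∫ η (exp (f/η) - 1) dP → ∫ f dP`. -/
lemma tendsto_J (hf : Measurable f) (hM : ∀ x, f x ≤ M) (hM0 : 0 ≤ M)
    (hfP : Integrable f P) :
    Filter.Tendsto (fun η : ℝ => ∫ x, η * (Real.exp (f x / η) - 1) ∂P)
      Filter.atTop (nhds (∫ x, f x ∂P)) := by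
  refine tendsto_integral_filter_of_dominated_convergence
    (fun x => |f x| + M * Real.exp M) ?_ ?_ (hfP.abs.add (integrable_const _)) ?_
  · exact Filter.Eventually.of_forall fun η =>
      (((hf.div_const η).exp.sub measurable_const).const_mul η).aestronglyMeasurable
  · filter_upwards [Filter.eventually_ge_atTop (1:ℝ)] with η hη
    exact Filter.Eventually.of_forall fun x => pw_eta_exp_bound hη (hM x) hM0
  · exact Filter.Eventually.of_forall fun x => tendsto_eta_exp (f x)

lemma eta_logZ_le (hf : Measurable f) (hM : ∀ x, f x ≤ M) {η : ℝ} (hη : 0 < η) :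
    η * Real.log (∫ x, Real.exp (f x / η) ∂P)
      ≤ ∫ x, η * (Real.exp (f x / η) - 1) ∂P := by
  have hZpos := Z_pos hf hM hη (P := P)
  have h1 : Real.log (∫ x, Real.exp (f x / η) ∂P) ≤ (∫ x, Real.exp (f x / η) ∂P) - 1 :=
    Real.log_le_sub_one_of_pos hZpos
  have h2 : ∫ x, η * (Real.exp (f x / η) - 1) ∂P
      = η * ((∫ x, Real.exp (f x / η) ∂P) - 1) := by
    rw [MeasureTheory.integral_const_mul, integral_sub (int_exp hf hM hη) (integrable_const 1)]
    simp [measure_univ]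
  rw [h2]
  exact mul_le_mul_of_nonneg_left h1 hη.le

lemma exists_eta_small [IsProbabilityMeasure P] (hf : Measurable f) (hM : ∀ x, f x ≤ M)
    (hM0 : 0 ≤ M) (hnotint : ¬ Integrable f P) (r : ℝ) :
    ∃ η : ℝ, 0 < η ∧ η * Real.log (∫ x, Real.exp (f x / η) ∂P) < r := by
  have htop : ∫⁻ x, ENNReal.ofReal (M - f x) ∂P = ⊤ := by
    by_contra hfin
    have hint : Integrable (fun x => M - f x) P := by
      refine ⟨(measurable_const.sub hf).aestronglyMeasurable, ?_⟩
      rw [hasFiniteIntegral_iff_ofReal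
        (Filter.Eventually.of_forall fun x => by simp only [Pi.zero_apply]; linarith [hM x])]
      exact lt_top_iff_ne_top.mpr hfin
    exact hnotint (((integrable_const M).sub hint).congr
      (Filter.Eventually.of_forall fun x => by simp only [Pi.sub_apply]; ring))
  set fN : ℕ → X → ℝ := fun N x => max (f x) (-(N:ℝ)) with hfNdef
  have hfN_meas : ∀ N, Measurable (fN N) := fun N => hf.max measurable_const
  have hfN_le : ∀ N x, fN N x ≤ M := fun N x =>
    max_le (hM x) (le_trans (neg_nonpos.mpr (Nat.cast_nonneg N)) hM0)
  have hfN_int : ∀ N, Integrable (fN N) P := by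
    intro N
    refine (integrable_const (max M (N:ℝ))).mono' (hfN_meas N).aestronglyMeasurable
      (Filter.Eventually.of_forall fun x => ?_)
    rw [Real.norm_eq_abs, abs_le]
    constructor
    · calc -(max M (N:ℝ)) ≤ -(N:ℝ) := by simp [neg_le_neg_iff.mpr (le_max_right M (N:ℝ))]
      _ ≤ fN N x := le_max_right _ _
    · exact (hfN_le N x).trans (le_max_left _ _)
  have hlim : Filter.Tendsto (fun N => ∫⁻ x, ENNReal.ofReal (M - fN N x) ∂P)
      Filter.atTop (nhds ⊤) := by
    rw [← htop]
    refine lintegral_tendsto_of_tendsto_of_monotone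
      (fun N => ((measurable_const.sub (hfN_meas N)).ennreal_ofReal).aemeasurable) ?_ ?_
    · refine Filter.Eventually.of_forall fun x => ?_
      intro a b hab
      apply ENNReal.ofReal_le_ofReal
      have : -(b:ℝ) ≤ -(a:ℝ) := by exact_mod_cast neg_le_neg (by exact_mod_cast hab)
      have : max (f x) (-(b:ℝ)) ≤ max (f x) (-(a:ℝ)) := max_le (le_max_left _ _)
        (this.trans (le_max_right _ _))
      simp only [hfNdef]
      linarith
    · refine Filter.Eventually.of_forall fun x => ?_
      refine tendsto_const_nhds.congr' ?_
      filter_upwards [Filter.eventually_ge_atTop (Nat.ceil (-(f x)))] with N hN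
      have : -(N:ℝ) ≤ f x := by
        have := (Nat.ceil_le.mp hN)
        linarith
      simp [hfNdef, max_eq_left this]
  obtain ⟨N, hN⟩ := (hlim.eventually (Ioi_mem_nhds
    (lt_top_iff_ne_top.mpr (ENNReal.ofReal_ne_top (r := M - (r - 1)))))).exists
  have hMfN_int : Integrable (fun x => M - fN N x) P := (integrable_const M).sub (hfN_int N)
  have hIN : ∫ x, fN N x ∂P < r - 1 := by
    have hnn : ∀ x, 0 ≤ M - fN N x := fun x => by linarith [hfN_le N x]
    have heq : ENNReal.ofReal (∫ x, (M - fN N x) ∂P) = ∫⁻ x, ENNReal.ofReal (M - fN N x) ∂P :=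
      ofReal_integral_eq_lintegral_ofReal hMfN_int (Filter.Eventually.of_forall hnn)
    have hlt : ENNReal.ofReal (M - (r - 1)) < ENNReal.ofReal (∫ x, (M - fN N x) ∂P) := by
      rw [heq]; exact hN
    have hlt2 : M - (r - 1) < ∫ x, (M - fN N x) ∂P := by
      rcases le_or_gt 0 (M - (r-1)) with h | h
      · exact (ENNReal.ofReal_lt_ofReal_iff_of_nonneg h).mp hlt
      · have : 0 ≤ ∫ x, (M - fN N x) ∂P := integral_nonneg hnn
        linarith
    have heq2 : ∫ x, (M - fN N x) ∂P = M - ∫ x, fN N x ∂P := by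
      rw [integral_sub (integrable_const M) (hfN_int N)]
      simp [measure_univ]
    rw [heq2] at hlt2
    linarith
  have hJ := tendsto_J (hfN_meas N) (hfN_le N) hM0 (hfN_int N)
  have hev : ∀ᶠ η : ℝ in Filter.atTop,
      (∫ x, η * (Real.exp (fN N x / η) - 1) ∂P) < r :=
    hJ.eventually_lt_const (by linarith)
  obtain ⟨η, hηr, hη0⟩ := (hev.and (Filter.eventually_gt_atTop (0:ℝ))).exists
  refine ⟨η, hη0, ?_⟩
  have hZle : (∫ x, Real.exp (f x / η) ∂P) ≤ ∫ x, Real.exp (fN N x / η) ∂P := by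
    refine integral_mono (int_exp hf hM hη0) (int_exp (hfN_meas N) (hfN_le N) hη0) fun x => ?_
    apply Real.exp_le_exp.mpr
    gcongr
    exact le_max_left _ _
  have hlogle : η * Real.log (∫ x, Real.exp (f x / η) ∂P)
      ≤ η * Real.log (∫ x, Real.exp (fN N x / η) ∂P) :=
    mul_le_mul_of_nonneg_left (Real.log_le_log (Z_pos hf hM hη0) hZle) hη0.le
  calc η * Real.log (∫ x, Real.exp (f x / η) ∂P)
      ≤ η * Real.log (∫ x, Real.exp (fN N x / η) ∂P) := hlogle
    _ ≤ ∫ x, η * (Real.exp (fN N x / η) - 1) ∂P :=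
        eta_logZ_le (hfN_meas N) (hfN_le N) hη0
    _ < r := hηr

end helpers2

section erealhelpers

lemma ereal_le_coe_of_forall_add {x : EReal} {l : ℝ}
    (h : ∀ ε : ℝ, 0 < ε → x ≤ ((l + ε : ℝ) : EReal)) : x ≤ (l : EReal) := by
  induction x using EReal.rec with
  | bot => exact bot_le
  | coe y =>
    refine EReal.coe_le_coe_iff.mpr (le_of_forall_pos_le_add fun ε hε => ?_)
    exact EReal.coe_le_coe_iff.mp (h ε hε)
  | top => exact absurd (h 1 one_pos) (EReal.coe_lt_top _).not_ge

lemma ereal_le_all {x : EReal} (h : ∀ r : ℝ, x ≤ (r : EReal)) (y : EReal) : x ≤ y := by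
  have hbot : x = ⊥ := by
    induction x using EReal.rec with
    | bot => rfl
    | coe z =>
      have := EReal.coe_le_coe_iff.mp (h (z - 1))
      linarith
    | top => exact absurd (h 0) (EReal.coe_lt_top _).not_ge
  rw [hbot]; exact bot_le

lemma ereal_le_of_le_add {x y : EReal} {α : ℝ} (hα : 0 < α)
    (h : ∀ η : ℝ, 0 < η → ∃ I : ℝ, ((I : ℝ) : EReal) ≤ y ∧ x ≤ ((I + η * α : ℝ) : EReal)) :
    x ≤ y := by
  induction y using EReal.rec with
  | bot =>
    obtain ⟨I, hI, _⟩ := h 1 one_pos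
    exact absurd hI (EReal.bot_lt_coe I).not_ge
  | coe s =>
    refine ereal_le_coe_of_forall_add fun ε hε => ?_
    obtain ⟨I, hIs, hxI⟩ := h (ε / α) (div_pos hε hα)
    have h2 : I + (ε / α) * α ≤ s + ε := by
      have := EReal.coe_le_coe_iff.mp hIs
      rw [div_mul_cancel₀ _ hα.ne']
      linarith
    exact hxI.trans (EReal.coe_le_coe_iff.mpr h2)
  | top => exact le_top

end erealhelpers

/-- Dual formula for maximizing a linear functional over a relative-entropy ball:
`sup { Q(f) : D(Q‖P) ≤ α } = inf_{η > 0} ηα + η log P(e^{f/η})`. -/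
theorem sup_over_kl_ball_duality {X : Type*} [MeasurableSpace X] [TopologicalSpace X]
    [PolishSpace X] [BorelSpace X]
    (P : Measure X) [IsProbabilityMeasure P]
    (f : X → ℝ) (hf : Measurable f) (hbd : BddAbove (Set.range f))
    (α : ℝ) (hα : 0 ≤ α) :
    (⨆ (Q : Measure X) (_ : IsProbabilityMeasure Q) (_ : Integrable f Q)
        (_ : relEnt Q P ≤ ENNReal.ofReal α), ((∫ x, f x ∂Q : ℝ) : EReal)) =
      ⨅ (η : ℝ) (_ : 0 < η),
        ((η * α + η * Real.log (∫ x, Real.exp (f x / η) ∂P) : ℝ) : EReal) := by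
  classical
  obtain ⟨M₀, hM₀⟩ := hbd
  set M : ℝ := max M₀ 0 with hMdef
  have hM : ∀ x, f x ≤ M := fun x => le_trans (hM₀ ⟨x, rfl⟩) (le_max_left _ _)
  have hM0 : (0:ℝ) ≤ M := le_max_right _ _
  set S : EReal := (⨆ (Q : Measure X) (_ : IsProbabilityMeasure Q) (_ : Integrable f Q)
        (_ : relEnt Q P ≤ ENNReal.ofReal α), ((∫ x, f x ∂Q : ℝ) : EReal)) with hSdef
  set R : EReal := ⨅ (η : ℝ) (_ : 0 < η),
        ((η * α + η * Real.log (∫ x, Real.exp (f x / η) ∂P) : ℝ) : EReal) with hRdef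
  have hSle : ∀ (Q : Measure X) (h1 : IsProbabilityMeasure Q) (h2 : Integrable f Q)
      (_ : relEnt Q P ≤ ENNReal.ofReal α), ((∫ x, f x ∂Q : ℝ) : EReal) ≤ S := by
    intro Q h1 h2 h3
    rw [hSdef]
    exact le_iSup_of_le Q (le_iSup_of_le h1 (le_iSup_of_le h2 (le_iSup_of_le h3 le_rfl)))
  have hRle : ∀ η : ℝ, 0 < η →
      R ≤ ((η * α + η * Real.log (∫ x, Real.exp (f x / η) ∂P) : ℝ) : EReal) := by
    intro η hη
    rw [hRdef]
    exact iInf_le_of_le η (iInf_le_of_le hη le_rfl)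
  refine le_antisymm ?_ ?_
  · -- sup ≤ inf
    rw [hSdef]
    refine iSup_le fun Q => iSup_le fun hQprob => iSup_le fun hfQ => iSup_le fun hrel => ?_
    haveI := hQprob
    rw [hRdef]
    refine le_iInf fun η => le_iInf fun hη => ?_
    rw [EReal.coe_le_coe_iff]
    by_cases hc : (Q ≪ P ∧ Integrable (fun x => Real.log (Q.rnDeriv P x).toReal) Q)
    · have hrel' : ENNReal.ofReal (∫ x, Real.log (Q.rnDeriv P x).toReal ∂Q)
          ≤ ENNReal.ofReal α := by
        simp only [relEnt] at hrel
        rwa [if_pos hc] at hrel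
      have hD := (ENNReal.ofReal_le_ofReal_iff hα).mp hrel'
      have hg := gibbs_ineq hf hM Q hc.1 hfQ hc.2 hη
      have := mul_le_mul_of_nonneg_left hD hη.le
      linarith
    · exfalso
      simp only [relEnt] at hrel
      rw [if_neg hc] at hrel
      exact lt_irrefl _ (lt_of_le_of_lt hrel ENNReal.ofReal_lt_top)
  · -- inf ≤ sup
    have hQt : ∀ η : ℝ, 0 < η → IsProbabilityMeasure (P.tilted (fun x => f x / η)) :=
      fun η hη => isProbabilityMeasure_tilted (int_exp hf hM hη)
    have hadm : ∀ η : ℝ, 0 < η →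
        ((∫ x, f x ∂(P.tilted (fun x => f x / η))) / η
          - Real.log (∫ x, Real.exp (f x / η) ∂P)) ≤ α →
        ((∫ x, f x ∂(P.tilted (fun x => f x / η)) : ℝ) : EReal) ≤ S := by
      intro η hη hKle
      haveI := hQt η hη
      refine hSle _ inferInstance (int_f_tilted hf hM hη) ?_
      rw [relEnt_tilted hf hM hη]
      exact ENNReal.ofReal_le_ofReal hKle
    rcases hα.lt_or_eq with hαpos | hα0
    · -- 0 < α
      by_cases hK : ∀ η : ℝ, 0 < η →
          (∫ x, f x ∂(P.tilted (fun x => f x / η))) / η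
            - Real.log (∫ x, Real.exp (f x / η) ∂P) ≤ α
      · -- case (a): all KL at most α
        refine ereal_le_of_le_add hαpos fun η hη => ?_
        refine ⟨∫ x, f x ∂(P.tilted (fun x => f x / η)), hadm η hη (hK η hη), ?_⟩
        refine (hRle η hη).trans (EReal.coe_le_coe_iff.mpr ?_)
        have h0 := kl_tilted_nonneg hf hM hη (P := P)
        have hL : η * Real.log (∫ x, Real.exp (f x / η) ∂P)
            ≤ ∫ x, f x ∂(P.tilted (fun x => f x / η)) := by
          have h1 : Real.log (∫ x, Real.exp (f x / η) ∂P)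
              ≤ (∫ x, f x ∂(P.tilted (fun x => f x / η))) / η := by linarith
          calc η * Real.log (∫ x, Real.exp (f x / η) ∂P)
              ≤ η * ((∫ x, f x ∂(P.tilted (fun x => f x / η))) / η) :=
                mul_le_mul_of_nonneg_left h1 hη.le
          _ = ∫ x, f x ∂(P.tilted (fun x => f x / η)) := by field_simp
        linarith
      · -- case (b): some KL exceeds α; use IVT
        push_neg at hK
        obtain ⟨η₀, hη₀pos, hKη₀⟩ := hK
        set Kf : ℝ → ℝ := fun η => (∫ x, f x ∂(P.tilted (fun x => f x / η))) / η
          - Real.log (∫ x, Real.exp (f x / η) ∂P) with hKfdef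
        set Kc : ℝ → ℝ := fun η =>
          ((∫ x, f x * Real.exp (f x / η) ∂P) / (∫ x, Real.exp (f x / η) ∂P)) / η
            - Real.log (∫ x, Real.exp (f x / η) ∂P) with hKcdef
        have hKeq : ∀ η : ℝ, 0 < η → Kf η = Kc η := by
          intro η hη
          rw [hKfdef, hKcdef]
          simp only []
          rw [integral_f_tilted hf hM hη]
        have hKccont : ∀ η : ℝ, 0 < η → ContinuousAt Kc η := by
          intro η hη
          have hZpos := Z_pos hf hM hη (P := P)
          refine ContinuousAt.sub ?_ ?_
          · exact ((contAt_N hf hM hη).div (contAt_Z hf hM hη) hZpos.ne').div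
              continuousAt_id hη.ne'
          · exact ContinuousAt.log (contAt_Z hf hM hη) hZpos.ne'
        have hKcont : ∀ η : ℝ, 0 < η → ContinuousAt Kf η := by
          intro η hη
          refine (hKccont η hη).congr ?_
          filter_upwards [Ioi_mem_nhds hη] with y hy
          exact (hKeq y hy).symm
        have hlim : Filter.Tendsto
            (fun η : ℝ => M / η - Real.log (∫ x, Real.exp (f x / η) ∂P))
            Filter.atTop (nhds 0) := by
          have h1 : Filter.Tendsto (fun η : ℝ => M / η) Filter.atTop (nhds 0) :=
            tendsto_const_nhds.div_atTop Filter.tendsto_id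
          have h2 : Filter.Tendsto (fun η : ℝ => Real.log (∫ x, Real.exp (f x / η) ∂P))
              Filter.atTop (nhds 0) := by
            have := (Real.continuousAt_log one_ne_zero).tendsto.comp (tendsto_Z_one hf hM (P := P))
            simpa [Function.comp_def] using this
          simpa using h1.sub h2
        obtain ⟨η₂, hη₂b, hη₂gt⟩ :=
          ((hlim.eventually_lt_const hαpos).and (Filter.eventually_gt_atTop η₀)).exists
        have hη₂pos : 0 < η₂ := hη₀pos.trans hη₂gt
        have hKη₂ : Kf η₂ < α := by
          haveI := hQt η₂ hη₂pos
          have hIle : ∫ x, f x ∂(P.tilted (fun x => f x / η₂)) ≤ M := by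
            calc ∫ x, f x ∂(P.tilted (fun x => f x / η₂))
                ≤ ∫ _x, M ∂(P.tilted (fun x => f x / η₂)) :=
                  integral_mono (int_f_tilted hf hM hη₂pos) (integrable_const M) hM
            _ = M := by simp [measure_univ]
          have hdiv : (∫ x, f x ∂(P.tilted (fun x => f x / η₂))) / η₂ ≤ M / η₂ :=
            (div_le_div_iff_of_pos_right hη₂pos).mpr hIle
          have : Kf η₂ ≤ M / η₂ - Real.log (∫ x, Real.exp (f x / η₂) ∂P) := by
            rw [hKfdef]; simp only []; linarith
          exact lt_of_le_of_lt this hη₂b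
        have hcontOn : ContinuousOn Kf (Set.Icc η₀ η₂) := fun η hη =>
          (hKcont η (lt_of_lt_of_le hη₀pos hη.1)).continuousWithinAt
        have hmem : α ∈ Set.Icc (Kf η₂) (Kf η₀) := ⟨hKη₂.le, hKη₀.le⟩
        obtain ⟨η₁, hη₁mem, hKη₁⟩ := intermediate_value_Icc' hη₂gt.le hcontOn hmem
        have hη₁pos : 0 < η₁ := lt_of_lt_of_le hη₀pos hη₁mem.1
        have hfinal := hadm η₁ hη₁pos (le_of_eq hKη₁)
        have hIval : η₁ * α + η₁ * Real.log (∫ x, Real.exp (f x / η₁) ∂P)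
            = ∫ x, f x ∂(P.tilted (fun x => f x / η₁)) := by
          have h1 : (∫ x, f x ∂(P.tilted (fun x => f x / η₁))) / η₁
              - Real.log (∫ x, Real.exp (f x / η₁) ∂P) = α := hKη₁
          have h2 : η₁ * ((∫ x, f x ∂(P.tilted (fun x => f x / η₁))) / η₁)
              = ∫ x, f x ∂(P.tilted (fun x => f x / η₁)) := by field_simp
          nlinarith [h1, h2]
        exact le_trans (hRle η₁ hη₁pos) (by rw [hIval]; exact hfinal)
    · -- α = 0
      subst hα0
      by_cases hfP : Integrable f P
      · have hPadm : ((∫ x, f x ∂P : ℝ) : EReal) ≤ S :=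
          hSle P inferInstance hfP (by rw [relEnt_self]; exact zero_le)
        refine le_trans ?_ hPadm
        have hJ := tendsto_J hf hM hM0 hfP
        have hcoe : Filter.Tendsto
            (fun η : ℝ => ((∫ x, η * (Real.exp (f x / η) - 1) ∂P : ℝ) : EReal))
            Filter.atTop (nhds ((∫ x, f x ∂P : ℝ) : EReal)) :=
          EReal.tendsto_coe.mpr hJ
        refine ge_of_tendsto hcoe ?_
        filter_upwards [Filter.eventually_gt_atTop (0:ℝ)] with η hη
        refine (hRle η hη).trans (EReal.coe_le_coe_iff.mpr ?_)
        have := eta_logZ_le hf hM hη (P := P)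
        nlinarith [this]
      · refine ereal_le_all (fun r => ?_) S
        obtain ⟨η, hη, hlt⟩ := exists_eta_small hf hM hM0 hfP r
        refine (hRle η hη).trans (EReal.coe_le_coe_iff.mpr ?_)
        nlinarith [hlt]

end
end

section
/- Let f : X → ℝ be measurable and bounded above, λ ≥ 0, and P a probability measure. Define the tilted measure Q_λ by dQ_λ/dP = e^{λ f} / P(e^{λ f}). Then for every probability measure Q with D(Q‖P) < ∞ and Q(f) finite: D(Q‖P) − D(Q_λ‖P) = D(Q‖Q_λ) + λ(Q(f) − Q_λ(f)); in particular D(Q‖P) − D(Q_λ‖P) ≥ λ(Q(f) − Q_λ(f)). -/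
open MeasureTheory ProbabilityTheory ENNReal

noncomputable section

lemma relEnt_eq {X : Type*} [MeasurableSpace X] {Q P : Measure X}
    (h1 : Q ≪ P) (h2 : Integrable (llr Q P) Q) :
    relEnt Q P = ENNReal.ofReal (∫ x, llr Q P x ∂Q) := by
  rw [relEnt, if_pos ⟨h1, h2⟩]
  rfl

/-- Gibbs' inequality: the KL integrand has nonnegative integral. -/
lemma gibbs_nonneg {X : Type*} [MeasurableSpace X] (μ ν : Measure X)
    [IsProbabilityMeasure μ] [IsProbabilityMeasure ν] (hμν : μ ≪ ν)
    (h_int : Integrable (llr μ ν) μ) : 0 ≤ ∫ x, llr μ ν x ∂μ := by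
  have h1 : ∀ᵐ x ∂μ, - llr μ ν x ≤ (ν.rnDeriv μ x).toReal - 1 := by
    filter_upwards [exp_neg_llr hμν] with x hx
    have h := Real.add_one_le_exp (- llr μ ν x)
    rw [hx] at h
    linarith
  have h2 : ∫ x, - llr μ ν x ∂μ ≤ ∫ x, ((ν.rnDeriv μ x).toReal - 1) ∂μ :=
    integral_mono_ae h_int.neg
      (Measure.integrable_toReal_rnDeriv.sub (integrable_const 1)) h1
  rw [integral_neg] at h2
  have h3 : ∫ x, ((ν.rnDeriv μ x).toReal - 1) ∂μ ≤ 0 := by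
    rw [integral_sub Measure.integrable_toReal_rnDeriv (integrable_const 1)]
    have h4 : ∫ x, (ν.rnDeriv μ x).toReal ∂μ ≤ (ν Set.univ).toReal := by
      have := Measure.setIntegral_toReal_rnDeriv_le (μ := ν) (ν := μ)
        (s := Set.univ) (measure_ne_top ν _)
      simpa using this
    simp only [integral_const, measure_univ, probReal_univ, ENNReal.toReal_one, smul_eq_mul, one_mul] at h4 ⊢
    linarith
  linarith

lemma aux_bound {l M t : ℝ} (hl : 0 < l) (ht : t ≤ M) :
    |t| * Real.exp (l * t) ≤ |M| * Real.exp (l * M) + 1 / (l * Real.exp 1) := by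
  rcases le_or_gt 0 t with h0 | h0
  · have h1 : |t| = t := abs_of_nonneg h0
    have h2 : Real.exp (l * t) ≤ Real.exp (l * M) :=
      Real.exp_le_exp.mpr (by nlinarith)
    have h3 : t ≤ |M| := le_trans ht (le_abs_self M)
    have h5 : 0 ≤ 1 / (l * Real.exp 1) := by positivity
    nlinarith [Real.exp_pos (l * M), Real.exp_pos (l * t)]
  · have h1 : |t| = -t := abs_of_neg h0
    have h6 : 0 < Real.exp (l * t) := Real.exp_pos _
    have h7 : 0 < Real.exp 1 := Real.exp_pos 1
    have key2 : -(l * t) ≤ Real.exp (-(l * t) - 1) := by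
      have := Real.add_one_le_exp (-(l * t) - 1); linarith
    have h2 : Real.exp (-(l * t) - 1) * (Real.exp (l * t) * Real.exp 1) = 1 := by
      rw [← Real.exp_add, ← Real.exp_add]
      ring_nf
      exact Real.exp_zero
    have key3 : -(l * t) * (Real.exp (l * t) * Real.exp 1)
        ≤ Real.exp (-(l * t) - 1) * (Real.exp (l * t) * Real.exp 1) :=
      mul_le_mul_of_nonneg_right key2 (by positivity)
    rw [h2] at key3
    have h9 : -t * Real.exp (l * t) ≤ 1 / (l * Real.exp 1) := by
      rw [le_div_iff₀ (by positivity)]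
      nlinarith
    nlinarith [abs_nonneg M, Real.exp_pos (l * M)]

/-- Csiszár-type Pythagorean identity for exponential tilting: with
`dQ_λ/dP = e^{λf}/P(e^{λf})`, for every `Q` with `D(Q‖P) < ∞` and `Q(f)` finite,
`D(Q‖P) − D(Q_λ‖P) = D(Q‖Q_λ) + λ(Q(f) − Q_λ(f))`, and in particular
`D(Q‖P) − D(Q_λ‖P) ≥ λ(Q(f) − Q_λ(f))`. -/
theorem tilting_identity {X : Type*} [MeasurableSpace X]
    (P : Measure X) [IsProbabilityMeasure P]
    (f : X → ℝ) (hf : Measurable f) (hbd : BddAbove (Set.range f))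
    (l : ℝ) (hl : 0 ≤ l)
    (Q : Measure X) [IsProbabilityMeasure Q]
    (hQ : relEnt Q P ≠ ⊤) (hfQ : Integrable f Q) :
    (relEnt Q P).toReal - (relEnt
        (P.withDensity fun x =>
          ENNReal.ofReal (Real.exp (l * f x) / ∫ z, Real.exp (l * f z) ∂P)) P).toReal =
      (relEnt Q
        (P.withDensity fun x =>
          ENNReal.ofReal (Real.exp (l * f x) / ∫ z, Real.exp (l * f z) ∂P))).toReal +
      l * ((∫ x, f x ∂Q) - ∫ x, f x ∂(P.withDensity fun x =>
          ENNReal.ofReal (Real.exp (l * f x) / ∫ z, Real.exp (l * f z) ∂P))) ∧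
    l * ((∫ x, f x ∂Q) - ∫ x, f x ∂(P.withDensity fun x =>
          ENNReal.ofReal (Real.exp (l * f x) / ∫ z, Real.exp (l * f z) ∂P))) ≤
      (relEnt Q P).toReal - (relEnt
        (P.withDensity fun x =>
          ENNReal.ofReal (Real.exp (l * f x) / ∫ z, Real.exp (l * f z) ∂P)) P).toReal := by
  -- extract the hypotheses from finiteness of relEnt Q P
  have hQ' := hQ
  rw [relEnt] at hQ'
  split_ifs at hQ' with hcond
  swap
  · exact absurd rfl hQ'
  obtain ⟨hQP, h_intQ'⟩ := hcond
  have h_intQ : Integrable (llr Q P) Q := h_intQ'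
  have hAnn : 0 ≤ ∫ x, llr Q P x ∂Q := gibbs_nonneg Q P hQP h_intQ
  have eA : (relEnt Q P).toReal = ∫ x, llr Q P x ∂Q := by
    rw [relEnt_eq hQP h_intQ, ENNReal.toReal_ofReal hAnn]
  rcases hl.eq_or_lt with hl0 | hl0
  · -- case l = 0
    subst hl0
    simp only [zero_mul, Real.exp_zero, integral_const, measure_univ, probReal_univ, ENNReal.toReal_one,
      smul_eq_mul, mul_one, one_mul, div_one, ENNReal.ofReal_one, withDensity_one]
    have hW : (P.withDensity fun _ => (1 : ℝ≥0∞)) = P := withDensity_one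
    rw [hW]
    have hPP : llr P P =ᵐ[P] fun _ => (0 : ℝ) := by
      filter_upwards [Measure.rnDeriv_self P] with x hx
      simp [llr, hx]
    have h_intPP : Integrable (llr P P) P := (integrable_congr hPP).mpr (integrable_const 0)
    have ePP : relEnt P P = 0 := by
      rw [relEnt_eq Measure.AbsolutelyContinuous.rfl h_intPP, integral_congr_ae hPP]
      simp
    rw [ePP]
    simp [eA, hAnn]
  -- case l > 0
  have hQt_eq : (P.withDensity fun x =>
      ENNReal.ofReal (Real.exp (l * f x) / ∫ z, Real.exp (l * f z) ∂P))
      = P.tilted (fun x => l * f x) := rfl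
  rw [hQt_eq]
  obtain ⟨M, hM⟩ := hbd
  have hfM : ∀ x, f x ≤ M := fun x => hM (Set.mem_range_self x)
  have hexp : Integrable (fun x => Real.exp (l * f x)) P := by
    refine Integrable.mono' (integrable_const (Real.exp (l * M)))
      ((hf.const_mul l).exp).aestronglyMeasurable (ae_of_all _ fun x => ?_)
    rw [Real.norm_eq_abs, abs_of_pos (Real.exp_pos _)]
    exact Real.exp_le_exp.mpr (mul_le_mul_of_nonneg_left (hfM x) hl)
  set Z := ∫ z, Real.exp (l * f z) ∂P with hZdef
  have hZpos : 0 < Z := integral_exp_pos hexp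
  haveI hQtP : IsProbabilityMeasure (P.tilted fun x => l * f x) :=
    isProbabilityMeasure_tilted hexp
  have hACt : P.tilted (fun x => l * f x) ≪ P := tilted_absolutelyContinuous P _
  have hACt' : P ≪ P.tilted (fun x => l * f x) := absolutelyContinuous_tilted hexp
  have hQQt : Q ≪ P.tilted (fun x => l * f x) := hQP.trans hACt'
  -- integrability of f w.r.t. the tilted measure
  have h_fQt : Integrable f (P.tilted fun x => l * f x) := by
    rw [Measure.tilted, integrable_withDensity_iff
      (((hf.const_mul l).exp.div_const Z).ennreal_ofReal)
      (ae_of_all _ fun x => ENNReal.ofReal_lt_top)]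
    have hC : ∀ x, ‖f x * (ENNReal.ofReal (Real.exp (l * f x) / Z)).toReal‖
        ≤ (|M| * Real.exp (l * M) + 1 / (l * Real.exp 1)) / Z := by
      intro x
      rw [ENNReal.toReal_ofReal (by positivity)]
      rw [Real.norm_eq_abs, ← mul_div_assoc, abs_div, abs_of_pos hZpos, abs_mul,
        abs_of_pos (Real.exp_pos _)]
      exact div_le_div_of_nonneg_right (aux_bound hl0 (hfM x)) hZpos.le
    refine Integrable.mono' (integrable_const _)
      ?_ (ae_of_all _ hC)
    exact (hf.mul (((hf.const_mul l).exp.div_const Z).ennreal_ofReal.ennreal_toReal)).aestronglyMeasurable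
  have h_gQt : Integrable (fun x => l * f x) (P.tilted fun x => l * f x) := h_fQt.const_mul l
  -- llr of the tilted measure w.r.t. P
  have hllr_t : llr (P.tilted fun x => l * f x) P
      =ᵐ[P.tilted fun x => l * f x] fun x => l * f x - Real.log Z :=
    hACt.ae_le (log_rnDeriv_tilted_left_self hexp)
  have h_int_t : Integrable (llr (P.tilted fun x => l * f x) P) (P.tilted fun x => l * f x) :=
    (integrable_congr hllr_t).mpr (h_gQt.sub (integrable_const _))
  have eBint : ∫ x, llr (P.tilted fun x => l * f x) P x ∂(P.tilted fun x => l * f x)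
      = l * (∫ x, f x ∂(P.tilted fun x => l * f x)) - Real.log Z := by
    rw [integral_congr_ae hllr_t, integral_sub h_gQt (integrable_const _),
      integral_const_mul]
    simp
  have hBnn : 0 ≤ ∫ x, llr (P.tilted fun x => l * f x) P x ∂(P.tilted fun x => l * f x) :=
    gibbs_nonneg _ _ hACt h_int_t
  have eB : (relEnt (P.tilted fun x => l * f x) P).toReal
      = l * (∫ x, f x ∂(P.tilted fun x => l * f x)) - Real.log Z := by
    rw [relEnt_eq hACt h_int_t, ENNReal.toReal_ofReal hBnn, eBint]
  -- llr of Q w.r.t. the tilted measure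
  have h_int_C : Integrable (llr Q (P.tilted fun x => l * f x)) Q :=
    integrable_llr_tilted_right hQP (hfQ.const_mul l) h_intQ hexp
  have eCint : ∫ x, llr Q (P.tilted fun x => l * f x) x ∂Q
      = ∫ x, llr Q P x ∂Q - l * (∫ x, f x ∂Q) + Real.log Z := by
    rw [integral_llr_tilted_right hQP (hfQ.const_mul l) hexp h_intQ, integral_const_mul]
  have hCnn : 0 ≤ ∫ x, llr Q (P.tilted fun x => l * f x) x ∂Q :=
    gibbs_nonneg _ _ hQQt h_int_C
  have eC : (relEnt Q (P.tilted fun x => l * f x)).toReal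
      = ∫ x, llr Q P x ∂Q - l * (∫ x, f x ∂Q) + Real.log Z := by
    rw [relEnt_eq hQQt h_int_C, ENNReal.toReal_ofReal hCnn, eCint]
  rw [eA, eB, eC]
  constructor
  · ring
  · linarith [hCnn, eCint]

end
end
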